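/- arXiv:2107.07404 — 14 statements merged into one kernel-verified Lean document; each statement's English description precedes it below -/
import Mathlib

section
/- Let n, d be coprime with 1 ≤ d < n, and a ∈ Z/nZ. For the round-robin matching with x = n−d, i.e., M(i,j) = 1 iff i = a − (j·d + t)·d⁻¹ (mod n) for some t ∈ {0,...,d-1}, the matching is symmetric in the sense that for every k ∈ Z/nZ, the set of right-agents matched to left-agent k equals the set of left-agents matched to right-agent k. -/
section

variable {R : Type*} [CommRing R] {u e : R}

theorem eq_sub_mul_add_mul_iff_add_eq (hue : u * e = 1) (a c i j : R) :
    i = a - (j * u + c) * e ↔ i + j = a - c * e := by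
  have hexpand : (j * u + c) * e = j + c * e := by linear_combination j * hue
  rw [hexpand]
  constructor <;> intro h <;> linear_combination h

theorem eq_sub_mul_add_mul_comm (hue : u * e = 1) (a c i j : R) :
    i = a - (j * u + c) * e ↔ j = a - (i * u + c) * e := by
  rw [eq_sub_mul_add_mul_iff_add_eq hue, eq_sub_mul_add_mul_iff_add_eq hue, add_comm]

end

theorem stmt_2_general (n d : ℕ)
    (hgcd : Nat.gcd n d = 1) (a : ZMod n) :
    ∀ k : ZMod n,
      {j : ZMod n | ∃ t < d,
        k = a - (j * (d : ZMod n) + (t : ZMod n)) * (d : ZMod n)⁻¹}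
      = {i : ZMod n | ∃ t < d,
        i = a - (k * (d : ZMod n) + (t : ZMod n)) * (d : ZMod n)⁻¹} := by
  have hd : (d : ZMod n) * (d : ZMod n)⁻¹ = 1 :=
    ZMod.coe_mul_inv_eq_one d (Nat.coprime_comm.mp hgcd)
  intro k
  ext j
  exact exists_congr fun t => and_congr_right fun _ => eq_sub_mul_add_mul_comm hd _ _ _ _

/-- For coprime n, d with 1 ≤ d < n and a ∈ ℤ/nℤ, the round-robin matching with
parameter x = n − d, given by M(i,j) = 1 iff i = a − (j·d + t)·d⁻¹ for some
t ∈ {0,…,d-1}, is symmetric: for every k, the set of right agents matched to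
left agent k equals the set of left agents matched to right agent k. -/
theorem stmt_2 (n d : ℕ) (hn : 2 ≤ n) (hd1 : 1 ≤ d) (hdn : d < n)
    (hgcd : Nat.gcd n d = 1) (a : ZMod n) :
    ∀ k : ZMod n,
      {j : ZMod n | ∃ t < d,
        k = a - (j * (d : ZMod n) + (t : ZMod n)) * (d : ZMod n)⁻¹}
      = {i : ZMod n | ∃ t < d,
        i = a - (k * (d : ZMod n) + (t : ZMod n)) * (d : ZMod n)⁻¹} :=
  stmt_2_general n d hgcd a
end

section
/- Let n, d be coprime with 1 ≤ d < n, and a ∈ Z/nZ. For the round-robin matching with x = d, i.e., M(i,j) = 1 iff i = a + (j·d + t)·d⁻¹ (mod n) for some t ∈ {0,...,d-1}, for every right-agent j ∈ Z/nZ there exists a left-agent i ∈ Z/nZ such that M_j^r = M_i^ℓ; specifically i = j + 2a + 1 − d⁻¹ (mod n). -/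
/-! With `u = d⁻¹` we have `(j * d + t) * u = j + t * u`, so `M_j^r = {a + j + t u : t < d}`.
Solving for `j'`, the neighbourhood of `i = j + 2a + 1 - u` is
`M_i^ℓ = {j + a + (1 - (t + 1) u) : t < d}`, and `1 - (t + 1) u = (d - 1 - t) u`:
the reflection `t ↦ d - 1 - t` of `{0, …, d - 1}` identifies the two sets. -/

theorem exists_lt_iff_exists_lt_rev {d : ℕ} {p : ℕ → Prop} :
    (∃ t < d, p (d - 1 - t)) ↔ ∃ t < d, p t := by
  constructor
  · rintro ⟨t, ht, hp⟩
    exact ⟨d - 1 - t, by omega, hp⟩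
  · rintro ⟨t, ht, hp⟩
    refine ⟨d - 1 - t, by omega, ?_⟩
    rwa [show d - 1 - (d - 1 - t) = t by omega]

section

variable {R : Type*} [CommRing R] {d : ℕ} {u : R}

theorem mul_natCast_add_natCast_mul_eq (hu : (d : R) * u = 1) (j : R) (t : ℕ) :
    (j * d + t) * u = j + t * u := by
  linear_combination j * hu

theorem one_sub_natCast_succ_mul (hu : (d : R) * u = 1) {t : ℕ} (ht : t < d) :
    1 - ((t : R) + 1) * u = ((d - 1 - t : ℕ) : R) * u := by
  rw [Nat.cast_sub (by omega), Nat.cast_sub (by omega)]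
  linear_combination -hu

theorem exists_lt_eq_add_one_sub_mul_iff (hu : (d : R) * u = 1) (b x : R) :
    (∃ t < d, x = b + (1 - ((t : R) + 1) * u)) ↔ ∃ t < d, x = b + t * u := by
  conv_rhs => rw [← exists_lt_iff_exists_lt_rev]
  refine exists_congr fun t => and_congr_right fun ht => ?_
  rw [one_sub_natCast_succ_mul hu ht]

end

theorem stmt_3_general (n d : ℕ)
    (hgcd : Nat.gcd n d = 1) (a : ZMod n) :
    ∀ j : ZMod n,
      {i : ZMod n | ∃ t < d,
        i = a + (j * (d : ZMod n) + (t : ZMod n)) * (d : ZMod n)⁻¹}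
      = {j' : ZMod n | ∃ t < d,
        j + 2 * a + 1 - (d : ZMod n)⁻¹
          = a + (j' * (d : ZMod n) + (t : ZMod n)) * (d : ZMod n)⁻¹} := by
  intro j
  have hu : (d : ZMod n) * (d : ZMod n)⁻¹ = 1 :=
    ZMod.coe_mul_inv_eq_one d (Nat.coprime_comm.mp hgcd)
  ext x
  rw [Set.mem_ofPred_eq, Set.mem_ofPred_eq]
  simp only [mul_natCast_add_natCast_mul_eq hu]
  have solve_left (t : ℕ) : j + 2 * a + 1 - (d : ZMod n)⁻¹ = a + (x + t * (d : ZMod n)⁻¹) ↔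
      x = j + a + (1 - ((t : ZMod n) + 1) * (d : ZMod n)⁻¹) := by
    constructor <;> intro h <;> linear_combination -h
  simp only [solve_left, exists_lt_eq_add_one_sub_mul_iff hu]
  simp only [add_assoc, add_left_comm a j]

/-- For coprime n, d with 1 ≤ d < n and a ∈ ℤ/nℤ, in the round-robin matching with
parameter x = d, given by M(i,j) = 1 iff i = a + (j·d + t)·d⁻¹ for some t ∈ {0,…,d-1},
for every right agent j there is a left agent i, namely i = j + 2a + 1 − d⁻¹, whose set
of matches M_i^ℓ equals j's set of matches M_j^r. -/
theorem stmt_3 (n d : ℕ) (hn : 2 ≤ n) (hd1 : 1 ≤ d) (hdn : d < n)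
    (hgcd : Nat.gcd n d = 1) (a : ZMod n) :
    ∀ j : ZMod n,
      {i : ZMod n | ∃ t < d,
        i = a + (j * (d : ZMod n) + (t : ZMod n)) * (d : ZMod n)⁻¹}
      = {j' : ZMod n | ∃ t < d,
        j + 2 * a + 1 - (d : ZMod n)⁻¹
          = a + (j' * (d : ZMod n) + (t : ZMod n)) * (d : ZMod n)⁻¹} :=
  stmt_3_general n d hgcd a
end

section
/- There is no complete SD-DEF1 matching in the following instance: n^ℓ = n^r = 4d with d ≥ 3, all degree constraints equal d, all left-agents have the common ranking 0 ≻ 1 ≻ ... ≻ 4d−1 over right-agents, the right-agents are partitioned into blocks B_m = {4m,...,4m+3} for m ∈ {0,...,d−1}, every right-agent in B_0 has ranking beginning 0 ≻ 1 ≻ 2 ≻ 3, every right-agent in B_1 has ranking beginning 0 ≻ 1 ≻ 4 ≻ 5, every right-agent in B_2 has ranking beginning 2 ≻ 3 ≻ 4 ≻ 5 (remaining agents in arbitrary order), and rankings of blocks B_3,...,B_{d−1} are arbitrary. -/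
/-!
Left SD-EF1 and the column degrees force every left agent to hold exactly one right agent of
each block `B_m`: on the prefix `Top_{4m}` the `4d` row counts sum to `4md` and differ by at
most one. So some `j₁ ∈ B₁` holds none of the left agents `0, 1, 4`, and right SD-EF1 of `j₁`
at `t = 3` lets no right agent hold two of them; likewise some `j₂ ∈ B₂` for `2, 3, 4`. The
agent `j₀ ∈ B₀` holding `4` therefore holds none of `0, 1, 2, 3`, and right SD-EF1 of `j₀` at
`t = 4` lets each agent of `B₀` hold at most one of them. But these four left agents put four
edges into `B₀`, and only the three agents of `B₀ \ {j₀}` can take them.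
-/

open Finset

theorem eq_of_forall_le_add_one_of_sum_eq {ι : Type*} {s : Finset ι} {f : ι → ℕ} {k : ℕ}
    (hf : ∀ i ∈ s, ∀ i' ∈ s, f i' ≤ f i + 1) (hsum : ∑ i ∈ s, f i = #s * k) :
    ∀ i ∈ s, f i = k := by
  intro i hi
  by_contra hne
  rcases Nat.lt_or_gt_of_ne hne with hlt | hgt
  · have := sum_lt_sum (g := fun _ ↦ k) (fun j hj ↦ (hf i hi j hj).trans hlt) ⟨i, hi, hlt⟩
    simp [hsum] at this
  · have := sum_lt_sum (f := fun _ ↦ k)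
      (fun j hj ↦ Nat.le_of_lt_succ (hgt.trans_le (hf j hj i hi))) ⟨i, hi, hgt⟩
    simp [hsum] at this

section Bipartite

variable {α β : Type*} {M : α → β → Bool}

theorem sum_card_filter_comm (S : Finset α) (T : Finset β) :
    ∑ i ∈ S, #{j ∈ T | M i j} = ∑ j ∈ T, #{i ∈ S | M i j} :=
  sum_card_bipartiteAbove_eq_sum_card_bipartiteBelow _

theorem exists_forall_eq_false_of_card_lt {R : Finset α} {B : Finset β}
    (hrow : ∀ r ∈ R, #{j ∈ B | M r j} ≤ 1) (hcard : #R < #B) :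
    ∃ j ∈ B, ∀ r ∈ R, M r j = false := by
  have hsum : ∑ j ∈ B, #{r ∈ R | M r j} < ∑ j ∈ B, 1 := by
    rw [← sum_card_filter_comm]
    simpa using (sum_le_card_nsmul _ _ 1 hrow).trans_lt (by simpa using hcard)
  obtain ⟨j, hj, hlt⟩ := exists_lt_of_sum_lt hsum
  exact ⟨j, hj, by simpa [filter_eq_empty_iff] using hlt⟩

theorem exists_eq_true_of_card_eq_of_card_filter_le_one {R : Finset α} {B : Finset β}
    (hrow : ∀ r ∈ R, #{j ∈ B | M r j} = 1) (hcol : ∀ j ∈ B, #{r ∈ R | M r j} ≤ 1)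
    (hcard : #R = #B) : ∀ j ∈ B, ∃ r ∈ R, M r j = true := by
  intro j hj
  by_contra! h
  have hzero : #{r ∈ R | M r j} < 1 := by simpa [filter_eq_empty_iff] using h
  have := sum_lt_sum hcol ⟨j, hj, hzero⟩
  rw [← sum_card_filter_comm, sum_congr rfl hrow] at this
  simp [hcard] at this

theorem eq_false_of_card_filter_le_one {R : Finset α} {j : β} {r s : α}
    (h : #{r ∈ R | M r j} ≤ 1) (hr : r ∈ R) (hs : s ∈ R) (hne : r ≠ s) (hMs : M s j = true) :
    M r j = false := by
  by_contra hMr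
  exact hne (card_le_one.mp h r (by simpa [hr] using hMr) s (by simp [hs, hMs]))

variable [DecidableEq α]

theorem card_filter_le_one_of_image_eq {τ : ℕ → α} {R : Finset α} {j j' : β} {t : ℕ}
    (hτ : (range t).image τ = R)
    (hR : #{p ∈ range t | M (τ p) j'} ≤ #{p ∈ range t | M (τ p) j} + 1)
    (hfree : ∀ r ∈ R, M r j = false) : #{r ∈ R | M r j'} ≤ 1 := by
  have hzero : #{p ∈ range t | M (τ p) j} = 0 := by
    simpa [filter_eq_empty_iff] using
      fun p hp ↦ hfree _ (hτ ▸ mem_image_of_mem τ (mem_range.mpr hp))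
  calc #{r ∈ R | M r j'} = #({p ∈ range t | M (τ p) j'}.image τ) := by
        rw [← hτ, filter_image]
    _ ≤ #{p ∈ range t | M (τ p) j'} := card_image_le
    _ ≤ 1 := by omega

theorem card_filter_le_one_of_card_lt {B : Finset β} {R : Finset α} {τ : β → ℕ → α} {t : ℕ}
    {j' : β} (hτ : ∀ j ∈ B, (range t).image (τ j) = R)
    (hR : ∀ j ∈ B, #{p ∈ range t | M (τ j p) j'} ≤ #{p ∈ range t | M (τ j p) j} + 1)
    (hrow : ∀ r ∈ R, #{j ∈ B | M r j} ≤ 1) (hcard : #R < #B) : #{r ∈ R | M r j'} ≤ 1 := by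
  obtain ⟨j, hj, hfree⟩ := exists_forall_eq_false_of_card_lt hrow hcard
  exact card_filter_le_one_of_image_eq (hτ j hj) (hR j hj) hfree

theorem exists_eq_true_of_image_eq {B : Finset β} {R : Finset α} {τ : β → ℕ → α} {t : ℕ}
    (hτ : ∀ j ∈ B, (range t).image (τ j) = R)
    (hR : ∀ j ∈ B, ∀ j' ∈ B,
      #{p ∈ range t | M (τ j p) j'} ≤ #{p ∈ range t | M (τ j p) j} + 1)
    (hrow : ∀ r ∈ R, #{j ∈ B | M r j} = 1) (hcard : #R = #B) :
    ∀ j ∈ B, ∃ r ∈ R, M r j = true := by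
  intro j hj
  by_contra! hfree
  obtain ⟨r, hr, hrj⟩ := exists_eq_true_of_card_eq_of_card_filter_le_one hrow
    (fun j' hj' ↦ card_filter_le_one_of_image_eq (hτ j hj) (hR j hj j' hj') (by simpa using hfree))
    hcard j hj
  exact hfree r hr hrj

end Bipartite

section LeftEnvy

variable {M : ℕ → ℕ → Bool}

theorem card_filter_range_eq_of_le_add_one {n c t k : ℕ}
    (hcol : ∀ j < t, #{i ∈ range n | M i j} = c)
    (hL : ∀ i < n, ∀ i' < n, #{j ∈ range t | M i' j} ≤ #{j ∈ range t | M i j} + 1)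
    (htk : t * c = n * k) : ∀ i < n, #{j ∈ range t | M i j} = k := by
  intro i hi
  refine eq_of_forall_le_add_one_of_sum_eq (s := range n) (f := fun i ↦ #{j ∈ range t | M i j})
    (fun i hi i' hi' ↦ hL i (mem_range.mp hi) i' (mem_range.mp hi')) ?_ i (mem_range.mpr hi)
  rw [sum_card_filter_comm, sum_congr rfl fun j hj ↦ hcol j (mem_range.mp hj)]
  simp [htk]

theorem card_filter_Ico_mul_eq_one {b d : ℕ}
    (hcol : ∀ j < b * d, #{i ∈ range (b * d) | M i j} = d)
    (hL : ∀ i < b * d, ∀ i' < b * d, ∀ t ≤ b * d,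
      #{j ∈ range t | M i' j} ≤ #{j ∈ range t | M i j} + 1)
    {m : ℕ} (hm : m < d) {i : ℕ} (hi : i < b * d) :
    #{j ∈ Ico (b * m) (b * m + b) | M i j} = 1 := by
  have hprefix : ∀ k ≤ d, #{j ∈ range (b * k) | M i j} = k := fun k hk ↦
    have hbk : b * k ≤ b * d := Nat.mul_le_mul_left b hk
    card_filter_range_eq_of_le_add_one (fun j hj ↦ hcol j (hj.trans_le hbk))
      (fun i hi i' hi' ↦ hL i hi i' hi' _ hbk) (by ring) i hi
  have hsplit := sum_range_add_sum_Ico (fun j ↦ if M i j then 1 else 0)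
    (Nat.mul_le_mul_left b m.le_succ)
  simp only [← card_filter, hprefix m hm.le, hprefix (m + 1) hm] at hsplit
  rw [← Nat.mul_succ]
  omega

end LeftEnvy

theorem stmt_6_general (d : ℕ) (hd : 3 ≤ d)
    (σ : ℕ → ℕ → ℕ)
    (hB0 : ∀ j < 4, σ j 0 = 0 ∧ σ j 1 = 1 ∧ σ j 2 = 2 ∧ σ j 3 = 3)
    (hB1 : ∀ j, 4 ≤ j → j < 8 → σ j 0 = 0 ∧ σ j 1 = 1 ∧ σ j 2 = 4 ∧ σ j 3 = 5)
    (hB2 : ∀ j, 8 ≤ j → j < 12 → σ j 0 = 2 ∧ σ j 1 = 3 ∧ σ j 2 = 4 ∧ σ j 3 = 5) :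
    ¬ ∃ M : ℕ → ℕ → Bool,
      (∀ i < 4 * d, ((Finset.range (4 * d)).filter (fun j => M i j)).card = d) ∧
      (∀ j < 4 * d, ((Finset.range (4 * d)).filter (fun i => M i j)).card = d) ∧
      (∀ i < 4 * d, ∀ i' < 4 * d, ∀ t ≤ 4 * d,
        ((Finset.range t).filter (fun j => M i' j)).card
          ≤ ((Finset.range t).filter (fun j => M i j)).card + 1) ∧
      (∀ j < 4 * d, ∀ j' < 4 * d, ∀ t ≤ 4 * d,
        ((Finset.range t).filter (fun p => M (σ j p) j')).card
          ≤ ((Finset.range t).filter (fun p => M (σ j p) j)).card + 1) := by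
  rintro ⟨M, -, hcol, hL, hR⟩
  have hblock : ∀ m < d, ∀ i < 4 * d, #{j ∈ Ico (4 * m) (4 * m + 4) | M i j} = 1 :=
    fun m hm i hi ↦ card_filter_Ico_mul_eq_one hcol hL hm hi
  obtain ⟨j₀, hj₀, h₄⟩ : ∃ j ∈ Ico 0 4, M 4 j = true := by
    obtain ⟨j, hj⟩ := card_pos.mp ((hblock 0 (by omega) 4 (by omega)).symm ▸ Nat.one_pos)
    exact ⟨j, mem_filter.mp hj⟩
  have hj₀' : j₀ < 4 * d := by simp at hj₀; omega
  have hcommon_top : ∀ m, m < d → ∀ R : Finset ℕ, #R = 3 → (∀ r ∈ R, r < 4 * d) →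
      (∀ j ∈ Ico (4 * m) (4 * m + 4), (range 3).image (σ j) = R) → #{r ∈ R | M r j₀} ≤ 1 :=
    fun m hm R hR3 hRd hτ ↦ card_filter_le_one_of_card_lt hτ
      (fun j hj ↦ hR j (by simp at hj; omega) j₀ hj₀' 3 (by omega))
      (fun r hr ↦ (hblock m hm r (hRd r hr)).le) (by simp [hR3])
  have h₁ : #{r ∈ {0, 1, 4} | M r j₀} ≤ 1 := hcommon_top 1 (by omega) _ rfl (by simp; omega)
    fun j hj ↦ by
      obtain ⟨e0, e1, e2, -⟩ := hB1 j (by simp at hj; omega) (by simp at hj; omega)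
      simp [range_add_one, e0, e1, e2]; decide
  have h₂ : #{r ∈ {2, 3, 4} | M r j₀} ≤ 1 := hcommon_top 2 (by omega) _ rfl (by simp; omega)
    fun j hj ↦ by
      obtain ⟨e0, e1, e2, -⟩ := hB2 j (by simp at hj; omega) (by simp at hj; omega)
      simp [range_add_one, e0, e1, e2]; decide
  have hrows : ∀ r ∈ range 4, M r j₀ = false := by
    intro r hr
    have : r < 4 := mem_range.mp hr
    interval_cases r
    · exact eq_false_of_card_filter_le_one h₁ (by simp) (by simp) (by decide) h₄
    · exact eq_false_of_card_filter_le_one h₁ (by simp) (by simp) (by decide) h₄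
    · exact eq_false_of_card_filter_le_one h₂ (by simp) (by simp) (by decide) h₄
    · exact eq_false_of_card_filter_le_one h₂ (by simp) (by simp) (by decide) h₄
  obtain ⟨r, hr, hMr⟩ := exists_eq_true_of_image_eq (B := Ico 0 4) (R := range 4) (τ := σ) (t := 4)
    (fun j hj ↦ by
      obtain ⟨e0, e1, e2, e3⟩ := hB0 j (by simp at hj; omega)
      simp [range_add_one, e0, e1, e2, e3])
    (fun j hj j' hj' ↦ hR j (by simp at hj; omega) j' (by simp at hj'; omega) 4 (by omega))
    (fun r hr ↦ hblock 0 (by omega) r (by simp at hr; omega)) rfl j₀ hj₀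
  simp [hrows r hr] at hMr

/-- Impossibility of complete SD-DEF1 matchings.  There are n^ℓ = n^r = 4d agents on
each side (d ≥ 3), all with degree constraint d.  All left agents share the ranking
0 ≻ 1 ≻ … ≻ 4d−1 over right agents.  Right agent j's ranking is given by the bijection
σ j of {0,…,4d−1} (position ↦ left agent): agents in block B₀ = {0,…,3} rank
0 ≻ 1 ≻ 2 ≻ 3 first, agents in B₁ = {4,…,7} rank 0 ≻ 1 ≻ 4 ≻ 5 first, agents in
B₂ = {8,…,11} rank 2 ≻ 3 ≻ 4 ≻ 5 first; all other rankings are arbitrary.  Then no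
complete matching (all degrees exactly d) is SD-DEF1 (SD-EF1 over both sides). -/
theorem stmt_6 (d : ℕ) (hd : 3 ≤ d)
    (σ : ℕ → ℕ → ℕ)
    (hσ : ∀ j < 4 * d, Set.BijOn (σ j) (Set.Iio (4 * d)) (Set.Iio (4 * d)))
    (hB0 : ∀ j < 4, σ j 0 = 0 ∧ σ j 1 = 1 ∧ σ j 2 = 2 ∧ σ j 3 = 3)
    (hB1 : ∀ j, 4 ≤ j → j < 8 → σ j 0 = 0 ∧ σ j 1 = 1 ∧ σ j 2 = 4 ∧ σ j 3 = 5)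
    (hB2 : ∀ j, 8 ≤ j → j < 12 → σ j 0 = 2 ∧ σ j 1 = 3 ∧ σ j 2 = 4 ∧ σ j 3 = 5) :
    ¬ ∃ M : ℕ → ℕ → Bool,
      (∀ i < 4 * d, ((Finset.range (4 * d)).filter (fun j => M i j)).card = d) ∧
      (∀ j < 4 * d, ((Finset.range (4 * d)).filter (fun i => M i j)).card = d) ∧
      (∀ i < 4 * d, ∀ i' < 4 * d, ∀ t ≤ 4 * d,
        ((Finset.range t).filter (fun j => M i' j)).card
          ≤ ((Finset.range t).filter (fun j => M i j)).card + 1) ∧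
      (∀ j < 4 * d, ∀ j' < 4 * d, ∀ t ≤ 4 * d,
        ((Finset.range t).filter (fun p => M (σ j p) j')).card
          ≤ ((Finset.range t).filter (fun p => M (σ j p) j)).card + 1) :=
  stmt_6_general d hd σ hB0 hB1 hB2
end

section
/- In any complete SD-DEF1 matching for the instance of the previous theorem (n = 4d agents per side, common degree d ≥ 3, left-agents with common ranking 0 ≻ ... ≻ 4d−1, right blocks B_m = {4m,...,4m+3}), every left-agent is matched to exactly one right-agent from each block B_m. -/
/-!
Because all left agents share one ranking, SD-EF1 on the left says that for every prefix
`{0, …, t - 1}` of the right side, any two left agents' numbers of partners in that prefix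
differ by at most one. Integers that pairwise differ by at most one and have an integral
average all equal that average. By double counting, the `4d` left agents have `t·d` partners
in total in a prefix of length `t`, since every right agent has degree `d`; for `t = 4m` the
average is `m`. So each left agent has exactly `m` partners among the first `4m` right agents,
and exactly `(m + 1) - m = 1` in the block `B_m`.
-/

open Finset

lemma Nat.eq_of_sum_eq_card_mul_of_le_add_one {ι : Type*} {s : Finset ι} {f : ι → ℕ} {v : ℕ}
    (hf : ∀ a ∈ s, ∀ b ∈ s, f b ≤ f a + 1) (hsum : ∑ a ∈ s, f a = #s * v) :
    ∀ a ∈ s, f a = v := by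
  intro a ha
  by_contra hne
  rcases Nat.lt_or_gt_of_ne hne with hlt | hgt
  · have : ∑ b ∈ s, f b < ∑ _b ∈ s, v :=
      sum_lt_sum (fun b hb => by have := hf a ha b hb; omega) ⟨a, ha, hlt⟩
    rw [hsum, sum_const, smul_eq_mul] at this
    exact lt_irrefl _ this
  · have : ∑ _b ∈ s, v < ∑ b ∈ s, f b :=
      sum_lt_sum (fun b hb => by have := hf b hb a ha; omega) ⟨a, ha, hgt⟩
    rw [hsum, sum_const, smul_eq_mul] at this
    exact lt_irrefl _ this

lemma card_filter_range_eq_of_col_card_eq {M : ℕ → ℕ → Bool} {n c t v : ℕ}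
    (hcol : ∀ j < t, #{i ∈ range n | M i j} = c)
    (hefl : ∀ i < n, ∀ i' < n, #{j ∈ range t | M i' j} ≤ #{j ∈ range t | M i j} + 1)
    (hv : t * c = n * v) :
    ∀ i < n, #{j ∈ range t | M i j} = v := by
  have hsum : ∑ i ∈ range n, #{j ∈ range t | M i j} = #(range n) * v :=
    calc ∑ i ∈ range n, #{j ∈ range t | M i j}
        = ∑ j ∈ range t, #{i ∈ range n | M i j} :=
          sum_card_bipartiteAbove_eq_sum_card_bipartiteBelow (fun i j => M i j = true)
      _ = t * c := by
          rw [sum_congr rfl fun j hj => hcol j (mem_range.mp hj), sum_const, card_range,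
            smul_eq_mul]
      _ = #(range n) * v := by rw [card_range, hv]
  intro i hi
  exact Nat.eq_of_sum_eq_card_mul_of_le_add_one
    (fun a ha b hb => hefl a (mem_range.mp ha) b (mem_range.mp hb)) hsum i (mem_range.mpr hi)

lemma card_filter_range_add_card_filter_Ico (p : ℕ → Prop) [DecidablePred p] {a b : ℕ}
    (hab : a ≤ b) : #{j ∈ range a | p j} + #{j ∈ Ico a b | p j} = #{j ∈ range b | p j} := by
  simp only [card_filter]
  exact sum_range_add_sum_Ico _ hab

theorem stmt_7_general (d : ℕ)
    (M : ℕ → ℕ → Bool)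
    (hcol : ∀ j < 4 * d, ((Finset.range (4 * d)).filter (fun i => M i j)).card = d)
    (hefl : ∀ i < 4 * d, ∀ i' < 4 * d, ∀ t ≤ 4 * d,
      ((Finset.range t).filter (fun j => M i' j)).card
        ≤ ((Finset.range t).filter (fun j => M i j)).card + 1) :
    ∀ i < 4 * d, ∀ m < d,
      ((Finset.Ico (4 * m) (4 * m + 4)).filter (fun j => M i j)).card = 1 := by
  intro i hi m hm
  have hprefix : ∀ t ≤ d, #{j ∈ range (4 * t) | M i j} = t := fun t ht =>
    card_filter_range_eq_of_col_card_eq (fun j hj => hcol j (by omega))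
      (fun a ha b hb => hefl a ha b hb _ (by omega)) (by ring) i hi
  rw [show 4 * m + 4 = 4 * (m + 1) by ring]
  have hsplit := card_filter_range_add_card_filter_Ico (fun j => M i j) (a := 4 * m)
    (b := 4 * (m + 1)) (by omega)
  rw [hprefix m hm.le, hprefix (m + 1) hm] at hsplit
  omega

/-- In the instance with n = 4d agents per side (d ≥ 3), common degree d, left agents
sharing the ranking 0 ≻ … ≻ 4d−1, and right agents' rankings given by bijections σ j
(with blocks B_m = {4m,…,4m+3}), any complete SD-DEF1 matching matches every left
agent to exactly one right agent from each block B_m. -/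
theorem stmt_7 (d : ℕ) (hd : 3 ≤ d)
    (σ : ℕ → ℕ → ℕ)
    (hσ : ∀ j < 4 * d, Set.BijOn (σ j) (Set.Iio (4 * d)) (Set.Iio (4 * d)))
    (M : ℕ → ℕ → Bool)
    (hrow : ∀ i < 4 * d, ((Finset.range (4 * d)).filter (fun j => M i j)).card = d)
    (hcol : ∀ j < 4 * d, ((Finset.range (4 * d)).filter (fun i => M i j)).card = d)
    (hefl : ∀ i < 4 * d, ∀ i' < 4 * d, ∀ t ≤ 4 * d,
      ((Finset.range t).filter (fun j => M i' j)).card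
        ≤ ((Finset.range t).filter (fun j => M i j)).card + 1)
    (hefr : ∀ j < 4 * d, ∀ j' < 4 * d, ∀ t ≤ 4 * d,
      ((Finset.range t).filter (fun p => M (σ j p) j')).card
        ≤ ((Finset.range t).filter (fun p => M (σ j p) j)).card + 1) :
    ∀ i < 4 * d, ∀ m < d,
      ((Finset.Ico (4 * m) (4 * m + 4)).filter (fun j => M i j)).card = 1 :=
  stmt_7_general d M hcol hefl
end

section
/- Let n ≥ 2 and d be coprime with 1 ≤ d < n. The 2n round-robin orderings R_{a,x} of Z/nZ defined by R_{a,x}(p) = a + p·x⁻¹ (mod n), for a ∈ Z/nZ and x ∈ {d, n−d}, give rise to 2n pairwise distinct complete matchings under the round-robin procedure (where left-agents pick in order R_{a,x}, cyclically over d rounds, each picking the smallest-indexed right-agent with remaining capacity d). -/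
/-!
Write `I = {u : ZMod n | u.val < d}` for the "interval" `{0, …, d - 1}`. For a unit `y`, the
pair `(i, j)` lies in the matching of `(a, y)` iff `(i - a) * y - j * d ∈ I`. After the
invertible change of variables `u = (i - a) * y`, `w = j * d`, equality of the matchings of
`(a, y)` and `(a', y')` says that `u - w ∈ I ↔ s * u + c - w ∈ I` for all `u, w`, where
`s = y' * y⁻¹` and `c = (a - a') * y'`, i.e. that `I` is invariant under translation by
`(s - 1) * u + c` for every `u`. Since `1 ≤ d < n`, the only translation fixing `I` is the
trivial one (`d - 1` is the only element of `I` whose successor leaves `I`), so `s = 1` and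
`c = 0`. Finally `x ∈ {d, n - d}` is recovered from its residue because `x < n`.
-/

namespace ZMod

variable {n d : ℕ}

lemma val_add_one_eq_of_val_lt_of_le [NeZero n] {u : ZMod n} (hu : u.val < d)
    (hu1 : d ≤ (u + 1).val) : u.val + 1 = d := by
  have : (1 : ZMod n).val ≤ 1 := (val_one_eq_one_mod n).trans_le (Nat.mod_le 1 n)
  have := val_add_le u 1
  omega

lemma eq_zero_of_forall_val_add_lt_iff (hd : 0 < d) (hdn : d < n) {c : ZMod n}
    (h : ∀ u : ZMod n, (u + c).val < d ↔ u.val < d) : c = 0 := by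
  have : NeZero n := ⟨by omega⟩
  set w : ZMod n := ((d - 1 : ℕ) : ZMod n) - c
  have hwc : (w + c).val = d - 1 := by
    rw [sub_add_cancel, val_cast_of_lt (by omega)]
  have hw1c : (w + 1 + c).val = d := by
    rw [add_right_comm, sub_add_cancel, ← Nat.cast_add_one, Nat.sub_add_cancel hd,
      val_cast_of_lt hdn]
  have hw : w.val + 1 = d :=
    val_add_one_eq_of_val_lt_of_le ((h w).1 (by omega))
      (not_lt.1 fun h1 => by have := (h (w + 1)).2 h1; omega)
  have : w = ((d - 1 : ℕ) : ZMod n) := by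
    rw [← natCast_zmod_val w, show w.val = d - 1 by omega]
  simpa [w] using this

lemma eq_one_and_eq_zero_of_forall_val_sub_lt_iff (hd : 0 < d) (hdn : d < n) {s c : ZMod n}
    (h : ∀ u w : ZMod n, (s * u + c - w).val < d ↔ (u - w).val < d) : s = 1 ∧ c = 0 := by
  have htrans (u : ZMod n) : (s - 1) * u + c = 0 :=
    eq_zero_of_forall_val_add_lt_iff hd hdn fun z => by
      convert h u (u - z) using 3 <;> ring
  have hc : c = 0 := by simpa using htrans 0
  refine ⟨?_, hc⟩
  simpa [hc, sub_eq_zero] using htrans 1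

end ZMod

/-- The matching produced by the round-robin procedure from the ordering `p ↦ a + p * y⁻¹`:
left-agent `i` is matched to right-agent `j` iff `i` picks at one of the positions
`j * d, …, j * d + d - 1` of the cyclic picking sequence. -/
def roundRobinMatching (n d : ℕ) (a y : ZMod n) : Set (ZMod n × ZMod n) :=
  {p | ∃ t < d, p.1 = a + (p.2 * (d : ZMod n) + (t : ZMod n)) * y⁻¹}

section roundRobinMatching

variable {n d : ℕ}

lemma mem_roundRobinMatching_iff [NeZero n] (hdn : d ≤ n) {a y : ZMod n} (hy : IsUnit y)
    (p : ZMod n × ZMod n) :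
    p ∈ roundRobinMatching n d a y ↔ ((p.1 - a) * y - p.2 * d).val < d := by
  obtain ⟨y, rfl⟩ := hy
  have hsolve (t : ZMod n) : p.1 = a + (p.2 * d + t) * (y : ZMod n)⁻¹ ↔
      (p.1 - a) * y - p.2 * d = t := by
    rw [ZMod.inv_coe_unit, ← sub_eq_iff_eq_add', Units.eq_mul_inv_iff_mul_eq, sub_eq_iff_eq_add']
  simp only [roundRobinMatching, Set.mem_ofPred_eq, hsolve]
  constructor
  · rintro ⟨t, ht, heq⟩
    rwa [heq, ZMod.val_cast_of_lt (ht.trans_le hdn)]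
  · exact fun h => ⟨_, h, (ZMod.natCast_zmod_val _).symm⟩

lemma eq_and_eq_of_roundRobinMatching_eq (hd : 0 < d) (hdn : d < n) (hdu : IsUnit (d : ZMod n))
    {a a' y y' : ZMod n} (hy : IsUnit y) (hy' : IsUnit y')
    (h : roundRobinMatching n d a y = roundRobinMatching n d a' y') : a = a' ∧ y = y' := by
  have : NeZero n := ⟨by omega⟩
  obtain ⟨y, rfl⟩ := hy
  obtain ⟨y', rfl⟩ := hy'
  obtain ⟨e, hde⟩ := hdu
  have hmem (p : ZMod n × ZMod n) := Set.ext_iff.1 h p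
  simp only [mem_roundRobinMatching_iff hdn.le (Units.isUnit _)] at hmem
  obtain ⟨hs, hc⟩ : (y' : ZMod n) * ↑y⁻¹ = 1 ∧ (a - a') * y' = 0 := by
    refine ZMod.eq_one_and_eq_zero_of_forall_val_sub_lt_iff hd hdn fun u w => ?_
    -- the pair `(i, j) = (a + u * y⁻¹, w * d⁻¹)`
    convert (hmem (a + u * ↑y⁻¹, w * ↑e⁻¹)).symm using 3 <;>
      · simp only [← hde]
        ring_nf
        simp
  exact ⟨sub_eq_zero.1 ((Units.mul_left_eq_zero _).1 hc), (Units.mul_inv_eq_one.1 hs).symm⟩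

end roundRobinMatching

theorem stmt_8_general (n d : ℕ) (hd1 : 1 ≤ d) (hdn : d < n)
    (hgcd : Nat.gcd n d = 1) :
    ∀ a a' : ZMod n, ∀ x x' : ℕ,
      (x = d ∨ x = n - d) → (x' = d ∨ x' = n - d) → (a, x) ≠ (a', x') →
      {p : ZMod n × ZMod n | ∃ t < d,
          p.1 = a + (p.2 * (d : ZMod n) + (t : ZMod n)) * (x : ZMod n)⁻¹}
        ≠ {p : ZMod n × ZMod n | ∃ t < d,
          p.1 = a' + (p.2 * (d : ZMod n) + (t : ZMod n)) * ((x' : ℕ) : ZMod n)⁻¹} := by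
  intro a a' x x' hx hx' hne hset
  have hunit {y : ℕ} (hy : y = d ∨ y = n - d) : y < n ∧ IsUnit (y : ZMod n) := by
    have hcop : d.Coprime n := Nat.coprime_comm.1 hgcd
    rcases hy with rfl | rfl
    · exact ⟨hdn, (ZMod.isUnit_iff_coprime _ _).2 hcop⟩
    · exact ⟨by omega,
        (ZMod.isUnit_iff_coprime _ _).2 ((Nat.coprime_self_sub_left hdn.le).2 hcop)⟩
  obtain ⟨hxn, hxu⟩ := hunit hx
  obtain ⟨hxn', hxu'⟩ := hunit hx'
  obtain ⟨rfl, hxx⟩ :=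
    eq_and_eq_of_roundRobinMatching_eq hd1 hdn (hunit (.inl rfl)).2 hxu hxu' hset
  have : x = x' := by
    simpa [Nat.mod_eq_of_lt, hxn, hxn'] using (ZMod.natCast_eq_natCast_iff' x x' n).1 hxx
  exact hne (by rw [this])

/-- For n ≥ 2 and d coprime with 1 ≤ d < n, the 2n round-robin orderings
R_{a,x}(p) = a + p·x⁻¹ (a ∈ ℤ/nℤ, x ∈ {d, n−d}) give rise to pairwise distinct complete
matchings: the matching of (a,x) matches i to j iff i = a + (j·d + t)·x⁻¹ for some
t ∈ {0,…,d−1}, and distinct parameter pairs (a,x) yield distinct matchings. -/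
theorem stmt_8 (n d : ℕ) (hn : 2 ≤ n) (hd1 : 1 ≤ d) (hdn : d < n)
    (hgcd : Nat.gcd n d = 1) :
    ∀ a a' : ZMod n, ∀ x x' : ℕ,
      (x = d ∨ x = n - d) → (x' = d ∨ x' = n - d) → (a, x) ≠ (a', x') →
      {p : ZMod n × ZMod n | ∃ t < d,
          p.1 = a + (p.2 * (d : ZMod n) + (t : ZMod n)) * (x : ZMod n)⁻¹}
        ≠ {p : ZMod n × ZMod n | ∃ t < d,
          p.1 = a' + (p.2 * (d : ZMod n) + (t : ZMod n)) * ((x' : ℕ) : ZMod n)⁻¹} :=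
  stmt_8_general n d hd1 hdn hgcd
end

section
/- Suppose n^ℓ·d^ℓ = n^r·d^r, all left-agents share a common additive utility u^ℓ over right-agents, all right-agents share a common additive utility u^r over left-agents. Then every complete matching M that is SD-DEF1 (with respect to the rankings induced by u^ℓ and u^r) satisfies u^ℓ(M_i^ℓ) ≥ (1/d^ℓ)·MMS^ℓ for every left-agent i, where MMS^ℓ = max over complete valid matchings M' of min over left-agents i' of u^ℓ(M'_{i'}). -/
/-!
Choose `t` with `t * d^r < n^ℓ ≤ (t + 1) * d^r`. In any complete matching the `t` best
right agents fill only `t * d^r < n^ℓ` slots, so some left agent receives none of them and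
its bundle is worth at most `d^ℓ · u^ℓ(t)`. In `M` the `t + 1` best right agents fill at
least `n^ℓ` slots; were `i` to receive none of them, SD-EF1 would cap every other left agent
at one of them, which is too few. So `i` holds some `j ≤ t`, worth at least `u^ℓ(t)`.
-/

open Finset

theorem Nat.exists_mul_lt_le_succ_mul {n d : ℕ} (hn : 0 < n) (hd : 0 < d) :
    ∃ t, t * d < n ∧ n ≤ (t + 1) * d := by
  refine ⟨(n - 1) / d, (Nat.div_mul_le_self (n - 1) d).trans_lt (by omega), ?_⟩
  have := Nat.lt_div_mul_add (a := n - 1) hd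
  rw [add_one_mul]
  omega

namespace Matching

variable {nl nr dr : ℕ} {M : ℕ → ℕ → Bool}

theorem sum_card_filter_range_eq_mul (hcol : ∀ j < nr, #{i ∈ range nl | M i j} = dr)
    {t : ℕ} (ht : t ≤ nr) :
    ∑ i ∈ range nl, #{j ∈ range t | M i j} = t * dr := by
  calc ∑ i ∈ range nl, #{j ∈ range t | M i j}
      = ∑ j ∈ range t, #{i ∈ range nl | M i j} :=
        sum_card_bipartiteAbove_eq_sum_card_bipartiteBelow (fun i j => M i j = true)
    _ = ∑ _j ∈ range t, dr := sum_congr rfl fun j hj => hcol j ((mem_range.1 hj).trans_le ht)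
    _ = t * dr := by rw [sum_const, card_range, smul_eq_mul]

theorem exists_forall_lt_eq_false_of_mul_lt (hcol : ∀ j < nr, #{i ∈ range nl | M i j} = dr)
    {t : ℕ} (ht : t ≤ nr) (hlt : t * dr < nl) :
    ∃ i < nl, ∀ j < t, M i j = false := by
  have hsum : ∑ i ∈ range nl, #{j ∈ range t | M i j} < ∑ _i ∈ range nl, 1 := by
    simpa [sum_card_filter_range_eq_mul hcol ht] using hlt
  obtain ⟨i, hi, hzero⟩ := exists_lt_of_sum_lt hsum
  refine ⟨i, mem_range.1 hi, fun j hj => ?_⟩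
  rw [Nat.lt_one_iff, card_eq_zero, filter_eq_empty_iff] at hzero
  simpa using hzero (mem_range.2 hj)

theorem exists_lt_of_le_mul_of_ef1 (hcol : ∀ j < nr, #{i ∈ range nl | M i j} = dr)
    {t : ℕ} (ht : t ≤ nr) (hle : nl ≤ t * dr) {i : ℕ} (hi : i < nl)
    (hef1 : ∀ i' < nl, #{j ∈ range t | M i' j} ≤ #{j ∈ range t | M i j} + 1) :
    ∃ j < t, M i j := by
  by_contra! hnone
  have hzero : #{j ∈ range t | M i j} = 0 := by
    rw [card_eq_zero, filter_eq_empty_iff]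
    exact fun j hj => by simpa using hnone j (mem_range.1 hj)
  have hsum : ∑ i' ∈ range nl, #{j ∈ range t | M i' j} < ∑ _i' ∈ range nl, 1 :=
    sum_lt_sum (fun i' hi' => by simpa [hzero] using hef1 i' (mem_range.1 hi'))
      ⟨i, mem_range.2 hi, by omega⟩
  simp only [sum_card_filter_range_eq_mul hcol ht, sum_const, card_range, smul_eq_mul,
    mul_one] at hsum
  omega

end Matching

open Matching in
theorem stmt_10_general (nl nr dl dr : ℕ)
    (hdl : 0 < dl) (hdr : 0 < dr) (hbal : nl * dl = nr * dr)
    (ul : ℕ → ℝ)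
    (hul0 : ∀ j, 0 ≤ ul j)
    (hulm : ∀ j j', j ≤ j' → ul j' ≤ ul j)
    (M : ℕ → ℕ → Bool)
    (hcol : ∀ j < nr, ((Finset.range nl).filter (fun i => M i j)).card = dr)
    (hefl : ∀ i < nl, ∀ i' < nl, ∀ t ≤ nr,
      ((Finset.range t).filter (fun j => M i' j)).card
        ≤ ((Finset.range t).filter (fun j => M i j)).card + 1) :
    ∀ i < nl, ∀ M' : ℕ → ℕ → Bool,
      (∀ i' < nl, ((Finset.range nr).filter (fun j => M' i' j)).card = dl) →
      (∀ j < nr, ((Finset.range nl).filter (fun i => M' i j)).card = dr) →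
      ∃ i' < nl,
        ∑ j ∈ (Finset.range nr).filter (fun j => M' i' j), ul j
          ≤ (dl : ℝ) * ∑ j ∈ (Finset.range nr).filter (fun j => M i j), ul j := by
  intro i hi M' hrow' hcol'
  obtain ⟨t, hlt, hle⟩ := Nat.exists_mul_lt_le_succ_mul (Nat.zero_lt_of_lt hi) hdr
  have htn : t < nr :=
    Nat.lt_of_mul_lt_mul_right (hlt.trans_le (hbal ▸ Nat.le_mul_of_pos_right nl hdl))
  obtain ⟨i₀, hi₀, havoid⟩ := exists_forall_lt_eq_false_of_mul_lt hcol' htn.le hlt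
  obtain ⟨j₀, hj₀, hMj₀⟩ :=
    exists_lt_of_le_mul_of_ef1 hcol htn hle hi fun i' hi' => hefl i hi i' hi' (t + 1) htn
  refine ⟨i₀, hi₀, ?_⟩
  calc ∑ j ∈ {j ∈ range nr | M' i₀ j}, ul j
      ≤ #{j ∈ range nr | M' i₀ j} • ul t :=
        sum_le_card_nsmul _ _ _ fun j hj =>
          hulm _ _ (not_lt.1 fun hjt => by simp [havoid j hjt] at hj)
    _ = dl * ul t := by rw [hrow' i₀ hi₀, nsmul_eq_mul]
    _ ≤ dl * ul j₀ := by gcongr; exact hulm _ _ (Nat.lt_succ_iff.1 hj₀)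
    _ ≤ dl * ∑ j ∈ {j ∈ range nr | M i j}, ul j := by
        gcongr
        exact single_le_sum (fun j _ => hul0 j) (mem_filter.2 ⟨mem_range.2 (by omega), hMj₀⟩)

/-- Suppose n^ℓ·d^ℓ = n^r·d^r, all left agents share the additive utility u^ℓ over
right agents and all right agents share u^r over left agents, where (wlog) both
utilities are nonincreasing in the index, so the induced common rankings are
0 ≻ 1 ≻ … on each side.  If a complete matching M (left degrees d^ℓ, right degrees
d^r) is SD-DEF1 with respect to these rankings, then every left agent i receives at
least (1/d^ℓ)·MMS^ℓ: for every complete matching M' there is a left agent i' with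
u^ℓ(M'_{i'}) ≤ d^ℓ · u^ℓ(M_i). -/
theorem stmt_10 (nl nr dl dr : ℕ) (hnl : 0 < nl) (hnr : 0 < nr)
    (hdl : 0 < dl) (hdr : 0 < dr) (hbal : nl * dl = nr * dr)
    (ul ur : ℕ → ℝ)
    (hul0 : ∀ j, 0 ≤ ul j) (hur0 : ∀ i, 0 ≤ ur i)
    (hulm : ∀ j j', j ≤ j' → ul j' ≤ ul j)
    (hurm : ∀ i i', i ≤ i' → ur i' ≤ ur i)
    (M : ℕ → ℕ → Bool)
    (hrow : ∀ i < nl, ((Finset.range nr).filter (fun j => M i j)).card = dl)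
    (hcol : ∀ j < nr, ((Finset.range nl).filter (fun i => M i j)).card = dr)
    (hefl : ∀ i < nl, ∀ i' < nl, ∀ t ≤ nr,
      ((Finset.range t).filter (fun j => M i' j)).card
        ≤ ((Finset.range t).filter (fun j => M i j)).card + 1)
    (hefr : ∀ j < nr, ∀ j' < nr, ∀ t ≤ nl,
      ((Finset.range t).filter (fun i => M i j')).card
        ≤ ((Finset.range t).filter (fun i => M i j)).card + 1) :
    ∀ i < nl, ∀ M' : ℕ → ℕ → Bool,
      (∀ i' < nl, ((Finset.range nr).filter (fun j => M' i' j)).card = dl) →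
      (∀ j < nr, ((Finset.range nl).filter (fun i => M' i j)).card = dr) →
      ∃ i' < nl,
        ∑ j ∈ (Finset.range nr).filter (fun j => M' i' j), ul j
          ≤ (dl : ℝ) * ∑ j ∈ (Finset.range nr).filter (fun j => M i j), ul j :=
  stmt_10_general nl nr dl dr hdl hdr hbal ul hul0 hulm M hcol hefl
end

section
/- In any complete matching of n^ℓ left-agents (common degree d^ℓ) and n^r right-agents (common degree d^r, with n^ℓ·d^ℓ = n^r·d^r) that is SD-EF1 over the left side with respect to a common left ranking 0 ≻ 1 ≻ ... ≻ n^r−1, every left-agent is matched to at least one right-agent in {0, 1, ..., ⌈n^ℓ/d^r⌉ − 1}. -/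
/-!
Let `t = ⌈n^ℓ/d^r⌉`; since `d^ℓ > 0` we have `t ≤ n^r`. Counting the matched pairs in the
first `t` columns by columns gives exactly `t·d^r ≥ n^ℓ`. If some left agent had no partner
among them, SD-EF1 at the prefix of length `t` would leave every other left agent at most
one partner there, for at most `n^ℓ - 1` pairs in total.
-/

open Finset

theorem Finset.exists_rel_of_card_le_mul_of_envy_le_one {α β : Type*} {r : α → β → Prop}
    [∀ a b, Decidable (r a b)] {s : Finset α} {t : Finset β} {d : ℕ}
    (hcol : ∀ b ∈ t, #{a ∈ s | r a b} = d) (hcard : #s ≤ #t * d)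
    (henvy : ∀ a ∈ s, ∀ a' ∈ s, #{b ∈ t | r a' b} ≤ #{b ∈ t | r a b} + 1) :
    ∀ a ∈ s, ∃ b ∈ t, r a b := by
  intro a ha
  by_contra! hnone
  have hzero : #{b ∈ t | r a b} = 0 := card_eq_zero.2 (filter_eq_empty_iff.2 hnone)
  have hcount : ∑ a' ∈ s, #{b ∈ t | r a' b} = #t * d := by
    rw [← smul_eq_mul, ← sum_const, ← sum_congr rfl hcol]
    exact sum_card_bipartiteAbove_eq_sum_card_bipartiteBelow r
  have hbound : ∑ a' ∈ s, #{b ∈ t | r a' b} < #s := by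
    rw [card_eq_sum_ones]
    refine sum_lt_sum (fun a' ha' => ?_) ⟨a, ha, by omega⟩
    have := henvy a ha a' ha'
    omega
  omega

theorem stmt_11_general (nl nr dl dr : ℕ)
    (hdl : 0 < dl) (hdr : 0 < dr) (hbal : nl * dl = nr * dr)
    (M : ℕ → ℕ → Bool)
    (hcol : ∀ j < nr, ((Finset.range nl).filter (fun i => M i j)).card = dr)
    (hefl : ∀ i < nl, ∀ i' < nl, ∀ t ≤ nr,
      ((Finset.range t).filter (fun j => M i' j)).card
        ≤ ((Finset.range t).filter (fun j => M i j)).card + 1) :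
    ∀ i < nl, ∃ j < (nl + dr - 1) / dr, M i j = true := by
  rw [← Nat.ceilDiv_eq_add_pred_div]
  have hle : nl ⌈/⌉ dr ≤ nr := (ceilDiv_le_iff_le_mul hdr).2 <|
    calc nl ≤ nl * dl := Nat.le_mul_of_pos_right nl hdl
      _ = dr * nr := by rw [hbal, mul_comm]
  have hcard : nl ≤ nl ⌈/⌉ dr * dr := by simpa [mul_comm] using le_smul_ceilDiv (b := nl) hdr
  have hmain := exists_rel_of_card_le_mul_of_envy_le_one (s := range nl) (t := range (nl ⌈/⌉ dr))
    (r := fun i j => M i j = true) (d := dr)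
    (fun j hj => hcol j ((mem_range.1 hj).trans_le hle)) (by simpa using hcard)
    (fun i hi i' hi' => hefl i (mem_range.1 hi) i' (mem_range.1 hi') _ hle)
  intro i hi
  simpa using hmain i (mem_range.2 hi)

/-- In any complete matching of n^ℓ left agents (common degree d^ℓ) and n^r right
agents (common degree d^r, with n^ℓ·d^ℓ = n^r·d^r) that is SD-EF1 over the left side
with respect to the common left ranking 0 ≻ 1 ≻ … ≻ n^r−1, every left agent is matched
to at least one right agent in {0, 1, …, ⌈n^ℓ/d^r⌉ − 1}. -/
theorem stmt_11 (nl nr dl dr : ℕ) (hnl : 0 < nl) (hnr : 0 < nr)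
    (hdl : 0 < dl) (hdr : 0 < dr) (hbal : nl * dl = nr * dr)
    (M : ℕ → ℕ → Bool)
    (hrow : ∀ i < nl, ((Finset.range nr).filter (fun j => M i j)).card = dl)
    (hcol : ∀ j < nr, ((Finset.range nl).filter (fun i => M i j)).card = dr)
    (hefl : ∀ i < nl, ∀ i' < nl, ∀ t ≤ nr,
      ((Finset.range t).filter (fun j => M i' j)).card
        ≤ ((Finset.range t).filter (fun j => M i j)).card + 1) :
    ∀ i < nl, ∃ j < (nl + dr - 1) / dr, M i j = true :=
  stmt_11_general nl nr dl dr hdl hdr hbal M hcol hefl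
end

section
/- Let n = d² + d for d ≥ 2 (so n is divisible by d and n ≥ d²), with n agents per side, common degree d. Let all left-agents have identical utilities over right-agents: value d+1 for right-agents 0,...,n/d−2, value 1 for right-agents n/d−1,...,n/d+d−2, and value 0 otherwise. Then for every c ∈ {0,...,d−1}, no complete matching is simultaneously SD-EFc over the left side and ((c+2)/d)-MMS over the left side. -/
/-!
Splitting the agents into `d + 1` groups of `d`, where group `r < d` shares the high item `r`
together with `d - 1` worthless items and the last group shares the `d` low items, gives a
complete matching in which everybody gets at least `d`; hence `MMS ≥ d`, and a
`((c+2)/d)`-MMS matching gives every agent utility at least `c + 2`. The `d` high items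
have only `d²` slots for `d² + d` agents, so some agent gets no high item; its utility is
then the number of its items among the top `2d`, so SD-EFc at `t = 2d` forces every agent to
hold at least two of the top `2d` items. That needs `2(d² + d)` slots, but these items have
only `2d²`.
-/

/-- The common left utility in the incompatibility instance with n = d² + d agents per
side and common degree d: value d+1 for right agents 0,…,n/d−2 (i.e. j < d), value 1
for right agents n/d−1,…,n/d+d−2 (i.e. d ≤ j < 2d), and value 0 otherwise. -/
def u12 (d j : ℕ) : ℕ := if j < d then d + 1 else if j < 2 * d then 1 else 0

open Finset

lemma exists_forall_eq_false_of_mul_lt {M : ℕ → ℕ → Bool} {n t d : ℕ}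
    (hcol : ∀ j < t, #{i ∈ range n | M i j} = d) (htd : t * d < n) :
    ∃ i < n, ∀ j < t, M i j = false := by
  by_contra! h
  have hle := card_nsmul_le_card_nsmul (fun i j => M i j = true) (s := range n) (t := range t)
    (m := 1) (n := d)
    (fun i hi => by
      obtain ⟨j, hj, hM⟩ := h i (mem_range.1 hi)
      exact card_pos.2 ⟨j, mem_filter.2 ⟨mem_range.2 hj, by simpa using hM⟩⟩)
    (fun j hj => (hcol j (mem_range.1 hj)).le)
  simp only [card_range, smul_eq_mul, mul_one] at hle
  omega

lemma sum_u12_eq_card_range_two_mul {d n : ℕ} {P : ℕ → Prop} [DecidablePred P] (hn : 2 * d ≤ n)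
    (hP : ∀ j < d, ¬ P j) :
    ∑ j ∈ range n with P j, u12 d j = #{j ∈ range (2 * d) | P j} := by
  have hu : ∀ j ∈ {j ∈ range n | P j}, u12 d j = if j < 2 * d then 1 else 0 := by
    intro j hj
    have : ¬ j < d := fun hjd => hP j hjd (mem_filter.1 hj).2
    simp [u12, this]
  rw [sum_congr rfl hu, ← card_filter, filter_filter]
  congr 1
  ext j
  simp only [mem_filter, mem_range]
  exact ⟨fun ⟨_, hPj, h2⟩ => ⟨h2, hPj⟩, fun ⟨h2, hPj⟩ => ⟨by omega, hPj, h2⟩⟩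

lemma card_filter_range_mul (d k : ℕ) (P : ℕ → ℕ → Bool) :
    #{j ∈ range (k * d) | P (j / d) (j % d)} = #{p ∈ range k ×ˢ range d | P p.1 p.2} := by
  rcases Nat.eq_zero_or_pos d with rfl | hd
  · simp
  have hdivmod : ∀ q r, r < d → (q * d + r) / d = q ∧ (q * d + r) % d = r := fun q r hr =>
    ⟨by rw [add_comm, Nat.add_mul_div_right _ _ hd, Nat.div_eq_of_lt hr, zero_add],
      by rw [add_comm, Nat.add_mul_mod_self_right, Nat.mod_eq_of_lt hr]⟩
  refine card_nbij' (fun j => (j / d, j % d)) (fun p => p.1 * d + p.2) ?_ ?_ ?_ ?_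
  · intro j hj
    simp only [mem_coe, mem_filter, mem_range, mem_product] at hj ⊢
    exact ⟨⟨Nat.div_lt_of_lt_mul (by rw [mul_comm]; exact hj.1), Nat.mod_lt _ hd⟩, hj.2⟩
  · rintro ⟨q, r⟩ hp
    simp only [mem_coe, mem_filter, mem_range, mem_product] at hp ⊢
    obtain ⟨hq, hr⟩ := hdivmod q r hp.1.2
    refine ⟨by nlinarith, ?_⟩
    rw [hq, hr]
    exact hp.2
  · intro j _
    exact Nat.div_add_mod' j d
  · rintro ⟨q, r⟩ hp
    simp only [mem_coe, mem_filter, mem_range, mem_product] at hp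
    simpa using hdivmod q r hp.1.2

/-- Item `q * d + r` is shared by the agents `i` with `i / d = itemGroup d q r`. -/
def itemGroup (d q r : ℕ) : ℕ := if q = 1 then d else r

def groupMatching (d i j : ℕ) : Bool := i / d = itemGroup d (j / d) (j % d)

lemma pos_of_lt_sq_add {d i : ℕ} (hi : i < d ^ 2 + d) : 0 < d := by
  rcases Nat.eq_zero_or_pos d with rfl | hd <;> simp_all

lemma card_filter_groupMatching_row {d i : ℕ} (hi : i < d ^ 2 + d) :
    #{j ∈ range (d ^ 2 + d) | groupMatching d i j} = d := by
  have hd := pos_of_lt_sq_add hi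
  rw [show d ^ 2 + d = (d + 1) * d by ring] at hi ⊢
  have ha : i / d ≤ d := Nat.lt_succ_iff.1 (Nat.div_lt_of_lt_mul (by rwa [mul_comm]))
  refine (card_filter_range_mul d (d + 1) (fun q r => i / d = itemGroup d q r)).trans ?_
  rcases ha.lt_or_eq with ha | ha
  · calc _ = #((range (d + 1)).erase 1 ×ˢ {i / d}) := by
          congr 1
          ext ⟨q, r⟩
          simp only [mem_filter, mem_product, mem_range, mem_erase, mem_singleton,
            decide_eq_true_eq]
          unfold itemGroup
          split_ifs <;> omega
      _ = d := by rw [card_product, card_erase_of_mem (by simp [hd]), card_range]; simp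
  · calc _ = #({1} ×ˢ range d) := by
          congr 1
          ext ⟨q, r⟩
          simp only [mem_filter, mem_product, mem_range, mem_singleton, decide_eq_true_eq]
          unfold itemGroup
          split_ifs <;> omega
      _ = d := by simp

lemma card_filter_groupMatching_col {d j : ℕ} (hj : j < d ^ 2 + d) :
    #{i ∈ range (d ^ 2 + d) | groupMatching d i j} = d := by
  have hd := pos_of_lt_sq_add hj
  set g := itemGroup d (j / d) (j % d)
  have hg : g < d + 1 := by
    unfold g itemGroup
    split_ifs
    · omega
    · exact (Nat.mod_lt j hd).trans (Nat.lt_succ_self d)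
  rw [show d ^ 2 + d = (d + 1) * d by ring]
  refine (card_filter_range_mul d (d + 1) (fun q _ => q = g)).trans ?_
  have : {p ∈ range (d + 1) ×ˢ range d | decide (p.1 = g)} = {g} ×ˢ range d := by
    ext ⟨q, r⟩
    simp only [mem_filter, mem_product, mem_range, mem_singleton, decide_eq_true_eq]
    constructor
    · rintro ⟨⟨-, hr⟩, rfl⟩; exact ⟨rfl, hr⟩
    · rintro ⟨rfl, hr⟩; exact ⟨⟨hg, hr⟩, rfl⟩
  rw [this, card_product, card_singleton, card_range, one_mul]

lemma le_sum_u12_groupMatching {d i : ℕ} (hi : i < d ^ 2 + d) :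
    d ≤ ∑ j ∈ range (d ^ 2 + d) with groupMatching d i j, u12 d j := by
  have hd := pos_of_lt_sq_add hi
  have ha : i / d ≤ d := Nat.lt_succ_iff.1 (Nat.div_lt_of_lt_mul (by nlinarith))
  rcases ha.lt_or_eq with ha | ha
  · set a := i / d with ha_def
    have hmem : a ∈ {j ∈ range (d ^ 2 + d) | groupMatching d i j} := by
      simp only [mem_filter, mem_range, groupMatching, itemGroup, ← ha_def,
        Nat.div_eq_of_lt ha, Nat.mod_eq_of_lt ha]
      exact ⟨by nlinarith, by simp⟩
    calc d ≤ u12 d a := by simp [u12, ha]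
      _ ≤ _ := single_le_sum (fun _ _ => Nat.zero_le _) hmem
  · have hlow : ∀ j ∈ {j ∈ range (d ^ 2 + d) | groupMatching d i j}, u12 d j = 1 := by
      intro j hj
      simp only [mem_filter, groupMatching, itemGroup, decide_eq_true_eq, ha] at hj
      split_ifs at hj with h1
      · have hj_eq := Nat.div_add_mod j d
        rw [h1, mul_one] at hj_eq
        have := Nat.mod_lt j hd
        simp [u12, show ¬ j < d by omega, show j < 2 * d by omega]
      · exact absurd hj.2.symm (Nat.mod_lt j hd).ne
    rw [sum_congr rfl hlow, sum_const, smul_eq_mul, mul_one, card_filter_groupMatching_row hi]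

theorem stmt_12_general (d : ℕ) (c : ℕ) (MMS : ℕ)
    (hMMS2 : ∀ M : ℕ → ℕ → Bool,
      (∀ i < d ^ 2 + d, ((Finset.range (d ^ 2 + d)).filter (fun j => M i j)).card = d) →
      (∀ j < d ^ 2 + d, ((Finset.range (d ^ 2 + d)).filter (fun i => M i j)).card = d) →
      ∃ i < d ^ 2 + d, ∑ j ∈ (Finset.range (d ^ 2 + d)).filter (fun j => M i j), u12 d j ≤ MMS) :
    ¬ ∃ M : ℕ → ℕ → Bool,
      (∀ i < d ^ 2 + d, ((Finset.range (d ^ 2 + d)).filter (fun j => M i j)).card = d) ∧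
      (∀ j < d ^ 2 + d, ((Finset.range (d ^ 2 + d)).filter (fun i => M i j)).card = d) ∧
      (∀ i < d ^ 2 + d, ∀ i' < d ^ 2 + d, ∀ t ≤ d ^ 2 + d,
        ((Finset.range t).filter (fun j => M i' j)).card
          ≤ ((Finset.range t).filter (fun j => M i j)).card + c) ∧
      (∀ i < d ^ 2 + d,
        (c + 2) * MMS ≤ d * ∑ j ∈ (Finset.range (d ^ 2 + d)).filter (fun j => M i j), u12 d j) := by
  rintro ⟨M, -, hcol, hEF, hα⟩
  obtain ⟨i, hi, hle⟩ := hMMS2 (groupMatching d) (fun _ => card_filter_groupMatching_row)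
    (fun _ => card_filter_groupMatching_col)
  have hMMS : d ≤ MMS := (le_sum_u12_groupMatching hi).trans hle
  have hd := pos_of_lt_sq_add hi
  have h2d : 2 * d ≤ d ^ 2 + d := by nlinarith
  obtain ⟨i₀, hi₀, hmiss⟩ := exists_forall_eq_false_of_mul_lt (t := d)
    (fun j hj => hcol j (by nlinarith)) (by nlinarith)
  have hgood : c + 2 ≤ #{j ∈ range (2 * d) | M i₀ j} := by
    rw [← sum_u12_eq_card_range_two_mul h2d (fun j hj => by simp [hmiss j hj])]
    exact Nat.le_of_mul_le_mul_left (by nlinarith [hα i₀ hi₀]) hd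
  have hcount := card_nsmul_le_card_nsmul (fun i j => M i j = true)
    (s := range (d ^ 2 + d)) (t := range (2 * d)) (m := 2) (n := d)
    (fun i hi => show 2 ≤ #{j ∈ range (2 * d) | M i j} by
      have := hEF i (mem_range.1 hi) i₀ hi₀ (2 * d) h2d; omega)
    (fun j hj => (hcol j ((mem_range.1 hj).trans_le h2d)).le)
  simp only [card_range, smul_eq_mul] at hcount
  nlinarith

/-- In the instance with n = d² + d agents per side (d ≥ 2), common degree d, and
common left utility `u12 d`, for every c ∈ {0,…,d−1} no complete matching is
simultaneously SD-EFc over the left side (with respect to the common ranking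
0 ≻ 1 ≻ …) and ((c+2)/d)-MMS over the left side, where MMS is the left maximin share
(characterized by the hypotheses: it is attained by some complete matching and no
complete matching exceeds it). -/
theorem stmt_12 (d : ℕ) (hd : 2 ≤ d) (c : ℕ) (hc : c < d) (MMS : ℕ)
    (hMMS1 : ∃ M : ℕ → ℕ → Bool,
      (∀ i < d ^ 2 + d, ((Finset.range (d ^ 2 + d)).filter (fun j => M i j)).card = d) ∧
      (∀ j < d ^ 2 + d, ((Finset.range (d ^ 2 + d)).filter (fun i => M i j)).card = d) ∧
      (∀ i < d ^ 2 + d, MMS ≤ ∑ j ∈ (Finset.range (d ^ 2 + d)).filter (fun j => M i j), u12 d j))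
    (hMMS2 : ∀ M : ℕ → ℕ → Bool,
      (∀ i < d ^ 2 + d, ((Finset.range (d ^ 2 + d)).filter (fun j => M i j)).card = d) →
      (∀ j < d ^ 2 + d, ((Finset.range (d ^ 2 + d)).filter (fun i => M i j)).card = d) →
      ∃ i < d ^ 2 + d, ∑ j ∈ (Finset.range (d ^ 2 + d)).filter (fun j => M i j), u12 d j ≤ MMS) :
    ¬ ∃ M : ℕ → ℕ → Bool,
      (∀ i < d ^ 2 + d, ((Finset.range (d ^ 2 + d)).filter (fun j => M i j)).card = d) ∧
      (∀ j < d ^ 2 + d, ((Finset.range (d ^ 2 + d)).filter (fun i => M i j)).card = d) ∧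
      (∀ i < d ^ 2 + d, ∀ i' < d ^ 2 + d, ∀ t ≤ d ^ 2 + d,
        ((Finset.range t).filter (fun j => M i' j)).card
          ≤ ((Finset.range t).filter (fun j => M i j)).card + c) ∧
      (∀ i < d ^ 2 + d,
        (c + 2) * MMS ≤ d * ∑ j ∈ (Finset.range (d ^ 2 + d)).filter (fun j => M i j), u12 d j) :=
  stmt_12_general d c MMS hMMS2
end

section
/- In the instance with n = d² + d agents per side, common degree d ≥ 2, and left utilities valuing right-agents 0,...,n/d−2 at d+1 each, right-agents n/d−1,...,n/d+d−2 at 1 each, and the rest at 0, the left maximin share MMS^ℓ equals exactly d. -/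
/-!
Write the left agent `i < d²` as `i = a * d + b` with `a, b < d`. It takes the right agent `a`
(value `d + 1`) and the `d - 1` right agents `c * d + b`, `2 ≤ c ≤ d` (value `0`); the last `d`
left agents share the `d` right agents of value `1`. Every right agent then has exactly `d`
partners, so every left agent gets at least `d`.

Conversely, in any matching in which each right agent has `d` partners, the left utilities sum to
`d * ∑ u = d (d² + 2d) < (d² + d)(d + 1)`, so some left agent gets at most `d`.
-/

def u13 (d j : ℕ) : ℕ := if j < d then d + 1 else if j < 2 * d then 1 else 0

open Finset

theorem Finset.sum_sum_filter_eq_sum_card_filter_smul {α ι β : Type*} [AddCommMonoid β]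
    (s : Finset α) (t : Finset ι) (p : α → ι → Prop) [∀ a i, Decidable (p a i)] (f : ι → β) :
    ∑ a ∈ s, ∑ i ∈ t with p a i, f i = ∑ i ∈ t, #{a ∈ s | p a i} • f i := by
  simp_rw [sum_filter]
  rw [sum_comm]
  refine sum_congr rfl fun i _ => ?_
  rw [← sum_filter, sum_const]

theorem Nat.card_filter_Ico_mul_mod_eq {d r : ℕ} (hr : r < d) (k m : ℕ) :
    #{j ∈ Ico (k * d) (m * d) | j % d = r} = m - k := by
  have hd : 0 < d := by omega
  have hinj : Function.Injective (· * d + r) := fun a b h =>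
    Nat.eq_of_mul_eq_mul_right hd (Nat.add_right_cancel h)
  have himage : {j ∈ Ico (k * d) (m * d) | j % d = r} = (Ico k m).image (· * d + r) := by
    ext j
    simp only [mem_filter, mem_Ico, mem_image]
    constructor
    · rintro ⟨⟨hkj, hjm⟩, rfl⟩
      exact ⟨j / d, ⟨(Nat.le_div_iff_mul_le hd).2 hkj, (Nat.div_lt_iff_lt_mul hd).2 hjm⟩,
        Nat.div_add_mod' j d⟩
    · rintro ⟨c, ⟨hkc, hcm⟩, rfl⟩
      have hcd : (c + 1) * d ≤ m * d := Nat.mul_le_mul_right d hcm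
      have hkd : k * d ≤ c * d := Nat.mul_le_mul_right d hkc
      refine ⟨⟨by omega, by rw [add_mul] at hcd; omega⟩, ?_⟩
      rw [Nat.mul_add_mod_self_right, Nat.mod_eq_of_lt hr]
  rw [himage, Finset.card_image_of_injective _ hinj, Nat.card_Ico]

theorem sum_range_u13 (d : ℕ) : ∑ j ∈ range (d ^ 2 + d), u13 d j = d ^ 2 + 2 * d := by
  have hdd : d ≤ d ^ 2 := Nat.le_self_pow two_ne_zero d
  rw [range_eq_Ico, ← sum_Ico_consecutive _ (Nat.zero_le (2 * d)) (by omega : 2 * d ≤ d ^ 2 + d),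
    ← sum_Ico_consecutive _ (Nat.zero_le d) (by omega : d ≤ 2 * d)]
  have high : ∀ j ∈ Ico 0 d, u13 d j = d + 1 := fun j hj => by
    simp_all [u13]
  have mid : ∀ j ∈ Ico d (2 * d), u13 d j = 1 := fun j hj => by
    simp only [mem_Ico] at hj
    simp [u13, hj.2, hj.1]
  have zero : ∀ j ∈ Ico (2 * d) (d ^ 2 + d), u13 d j = 0 := fun j hj => by
    simp only [mem_Ico] at hj
    simp [u13, show ¬ j < d by omega, show ¬ j < 2 * d by omega]
  rw [sum_congr rfl high, sum_congr rfl mid, sum_congr rfl zero]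
  simp only [sum_const, Nat.card_Ico, smul_eq_mul]
  rw [Nat.sub_zero, show 2 * d - d = d by omega, sq]
  ring

theorem exists_sum_u13_le {d : ℕ} (hd : 0 < d) (M : ℕ → ℕ → Bool)
    (hM : ∀ j < d ^ 2 + d, #{i ∈ range (d ^ 2 + d) | M i j} = d) :
    ∃ i < d ^ 2 + d, ∑ j ∈ range (d ^ 2 + d) with M i j, u13 d j ≤ d := by
  have hlt : ∑ i ∈ range (d ^ 2 + d), ∑ j ∈ range (d ^ 2 + d) with M i j, u13 d j <
      ∑ _i ∈ range (d ^ 2 + d), (d + 1) := by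
    rw [sum_sum_filter_eq_sum_card_filter_smul,
      sum_congr rfl fun j hj => by rw [hM j (mem_range.1 hj)], ← smul_sum, sum_range_u13,
      sum_const, card_range, smul_eq_mul, smul_eq_mul]
    nlinarith
  obtain ⟨i, hi, hui⟩ := exists_lt_of_sum_lt hlt
  exact ⟨i, mem_range.1 hi, Nat.lt_succ_iff.1 hui⟩

def mmsMatching (d i j : ℕ) : Bool :=
  decide (if i < d ^ 2 then j = i / d ∨ 2 * d ≤ j ∧ j % d = i % d else d ≤ j ∧ j < 2 * d)

section mmsMatching

variable {d i j : ℕ}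

theorem filter_mmsMatching_left_of_lt (hi : i < d ^ 2) :
    {j ∈ range (d ^ 2 + d) | mmsMatching d i j} =
      insert (i / d) {j ∈ Ico (2 * d) ((d + 1) * d) | j % d = i % d} := by
  have hid : i / d < d := Nat.div_lt_of_lt_mul (by rwa [← sq])
  have hn : (d + 1) * d = d ^ 2 + d := by ring
  ext j
  simp only [mmsMatching, hi, if_true, decide_eq_true_eq, mem_filter, mem_range, mem_insert,
    mem_Ico, hn]
  omega

theorem filter_mmsMatching_left_of_le (hi : d ^ 2 ≤ i) :
    {j ∈ range (d ^ 2 + d) | mmsMatching d i j} = Ico d (2 * d) := by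
  have hdd : d ≤ d ^ 2 := Nat.le_self_pow two_ne_zero d
  ext j
  simp only [mmsMatching, not_lt.2 hi, if_false, decide_eq_true_eq, mem_filter, mem_range,
    mem_Ico]
  omega

theorem filter_mmsMatching_right_of_lt (hd : 0 < d) (hj : j < d) :
    {i ∈ range (d ^ 2 + d) | mmsMatching d i j} = Ico (j * d) (j * d + d) := by
  have hjd : j * d + d ≤ d ^ 2 := by rw [sq, ← Nat.succ_mul]; exact Nat.mul_le_mul_right d hj
  ext i
  have := Nat.div_eq_iff (x := i) (y := j) hd
  simp only [mem_filter, mem_range, mem_Ico]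
  by_cases hi : i < d ^ 2
  · simp only [mmsMatching, hi, if_true, decide_eq_true_eq]
    omega
  · simp only [mmsMatching, hi, if_false, decide_eq_true_eq]
    omega

theorem filter_mmsMatching_right_of_le_of_lt (hj : d ≤ j) (hj' : j < 2 * d) :
    {i ∈ range (d ^ 2 + d) | mmsMatching d i j} = Ico (d ^ 2) (d ^ 2 + d) := by
  ext i
  simp only [mem_filter, mem_range, mem_Ico]
  by_cases hi : i < d ^ 2
  · have hid : i / d < d := Nat.div_lt_of_lt_mul (by rwa [← sq])
    simp only [mmsMatching, hi, if_true, decide_eq_true_eq]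
    omega
  · simp only [mmsMatching, hi, if_false, decide_eq_true_eq]
    omega

theorem filter_mmsMatching_right_of_le (hj : 2 * d ≤ j) :
    {i ∈ range (d ^ 2 + d) | mmsMatching d i j} = {i ∈ Ico (0 * d) (d * d) | i % d = j % d} := by
  have hdd : d * d = d ^ 2 := (sq d).symm
  ext i
  simp only [mem_filter, mem_range, mem_Ico]
  by_cases hi : i < d ^ 2
  · have hid : i / d < d := Nat.div_lt_of_lt_mul (by rwa [← sq])
    simp only [mmsMatching, hi, if_true, decide_eq_true_eq]
    omega
  · simp only [mmsMatching, hi, if_false, decide_eq_true_eq]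
    omega

theorem card_filter_mmsMatching_left (hd : 0 < d) :
    #{j ∈ range (d ^ 2 + d) | mmsMatching d i j} = d := by
  by_cases hi' : i < d ^ 2
  · have hid : i / d < d := Nat.div_lt_of_lt_mul (by rwa [← sq])
    rw [filter_mmsMatching_left_of_lt hi', card_insert_of_notMem (by simp; omega),
      Nat.card_filter_Ico_mul_mod_eq (Nat.mod_lt i hd)]
    omega
  · rw [filter_mmsMatching_left_of_le (not_lt.1 hi'), Nat.card_Ico]
    omega

theorem card_filter_mmsMatching_right (hd : 0 < d) :
    #{i ∈ range (d ^ 2 + d) | mmsMatching d i j} = d := by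
  rcases lt_or_ge j d with hj₁ | hj₁
  · rw [filter_mmsMatching_right_of_lt hd hj₁, Nat.card_Ico]
    omega
  rcases lt_or_ge j (2 * d) with hj₂ | hj₂
  · rw [filter_mmsMatching_right_of_le_of_lt hj₁ hj₂, Nat.card_Ico]
    omega
  · rw [filter_mmsMatching_right_of_le hj₂, Nat.card_filter_Ico_mul_mod_eq (Nat.mod_lt j hd),
      Nat.sub_zero]

theorem le_sum_u13_mmsMatching :
    d ≤ ∑ j ∈ range (d ^ 2 + d) with mmsMatching d i j, u13 d j := by
  by_cases hi' : i < d ^ 2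
  · have hid : i / d < d := Nat.div_lt_of_lt_mul (by rwa [← sq])
    have hmem : i / d ∈ {j ∈ range (d ^ 2 + d) | mmsMatching d i j} := by
      rw [filter_mmsMatching_left_of_lt hi']
      exact mem_insert_self _ _
    calc d ≤ u13 d (i / d) := by simp [u13, hid]
      _ ≤ _ := single_le_sum (fun _ _ => Nat.zero_le _) hmem
  · have hone : ∀ j ∈ Ico d (2 * d), u13 d j = 1 := fun j hj => by
      simp only [mem_Ico] at hj
      simp [u13, hj.2, not_lt.2 hj.1]
    rw [filter_mmsMatching_left_of_le (not_lt.1 hi'), sum_congr rfl hone, sum_const,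
      Nat.card_Ico, smul_eq_mul, mul_one]
    omega

end mmsMatching

/-- In the instance with n = d² + d agents per side (d ≥ 2), common degree d, and
common left utility `u13 d`, the left maximin share MMS^ℓ equals exactly d: some
complete matching gives every left agent utility at least d, and every complete
matching gives some left agent utility at most d. -/
theorem stmt_13 (d : ℕ) (hd : 2 ≤ d) :
    (∃ M : ℕ → ℕ → Bool,
      (∀ i < d ^ 2 + d, ((Finset.range (d ^ 2 + d)).filter (fun j => M i j)).card = d) ∧
      (∀ j < d ^ 2 + d, ((Finset.range (d ^ 2 + d)).filter (fun i => M i j)).card = d) ∧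
      (∀ i < d ^ 2 + d,
        d ≤ ∑ j ∈ (Finset.range (d ^ 2 + d)).filter (fun j => M i j), u13 d j)) ∧
    (∀ M : ℕ → ℕ → Bool,
      (∀ i < d ^ 2 + d, ((Finset.range (d ^ 2 + d)).filter (fun j => M i j)).card = d) →
      (∀ j < d ^ 2 + d, ((Finset.range (d ^ 2 + d)).filter (fun i => M i j)).card = d) →
      ∃ i < d ^ 2 + d,
        ∑ j ∈ (Finset.range (d ^ 2 + d)).filter (fun j => M i j), u13 d j ≤ d) := by
  have hd₀ : 0 < d := by omega
  exact ⟨⟨mmsMatching d, fun _ _ => card_filter_mmsMatching_left hd₀,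
    fun _ _ => card_filter_mmsMatching_right hd₀, fun _ _ => le_sum_u13_mmsMatching⟩,
    fun M _ hM => exists_sum_u13_le hd₀ M hM⟩
end

section
/- Let n = 7, d = 3, and let u(j) = 6 − j for j ∈ {0,...,6}. In any partition of the multiset consisting of 3 copies of each element of {0,...,6} into 7 bundles of size 3, each containing distinct elements (i.e., any complete 3-regular bipartite matching viewed from one side), such that every bundle has u-value exactly 9: up to permutation of the bundles, the bundles must be {0,4,5}, {0,4,5}, {0,3,6}, {1,2,6}, {1,2,6}, {1,3,5}, {2,3,4}. -/
/-!
A 3-subset of {0,…,6} has value 9 exactly when its elements sum to 9, and there are five such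
sets: {0,3,6}, {0,4,5}, {1,2,6}, {1,3,5}, {2,3,4}. Every item lies in exactly three bundles, so the
multiplicities (a, b, c, d, e) of these five sets satisfy a + b = a + c = a + d + e = c + d = c + e
= b + d = b + e = 3, whose only solution is (1, 2, 2, 1, 1). Two families with the same
multiplicities differ by a permutation of the indices.
-/

/-- The unique (up to permutation of the bundles) list of bundles of value exactly 9
in the n = 7, d = 3 instance with utility u(j) = 6 − j. -/
def target14 : Fin 7 → Finset ℕ :=
  ![{0,4,5}, {0,4,5}, {0,3,6}, {1,2,6}, {1,2,6}, {1,3,5}, {2,3,4}]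

open Finset

theorem Equiv.Perm.exists_apply_eq_of_card_fiber_eq {ι α : Type*} [Fintype ι] [DecidableEq α]
    {f g : ι → α} (h : ∀ a, #{i | f i = a} = #{i | g i = a}) :
    ∃ σ : Equiv.Perm ι, ∀ i, f (σ i) = g i :=
  ⟨Equiv.ofFiberEquiv fun a => Fintype.equivOfCardEq <| by
      simpa only [Fintype.card_subtype] using (h a).symm,
    Equiv.ofFiberEquiv_map _⟩

theorem Finset.card_filter_comp_eq_sum_card_fiber {ι κ : Type*} [Fintype ι] [Fintype κ]
    [DecidableEq κ] (F : ι → κ) (p : κ → Prop) [DecidablePred p] :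
    #{i | p (F i)} = ∑ c with p c, #{i | F i = c} := by
  rw [card_eq_sum_card_fiberwise (f := F) (t := {c | p c}) fun i hi => by simpa using hi]
  refine sum_congr rfl fun c hc => ?_
  rw [filter_filter]
  refine congrArg card <| filter_congr fun i _ => ?_
  simp only [mem_filter, mem_univ, true_and] at hc
  exact ⟨fun h => h.2, fun h => ⟨h ▸ hc, h⟩⟩

theorem Finset.card_filter_range_eq_card_filter_fin (n : ℕ) (p : ℕ → Prop) [DecidablePred p] :
    #{i ∈ range n | p i} = #{i : Fin n | p i} := by
  rw [← Nat.Iio_eq_range, ← Fin.map_valEmbedding_univ, filter_map, card_map]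
  rfl

def valueNineBundle : Fin 5 → Finset ℕ := ![{0,3,6}, {0,4,5}, {1,2,6}, {1,3,5}, {2,3,4}]

set_option maxRecDepth 10000 in
theorem exists_eq_valueNineBundle {S : Finset ℕ} (hS : S ⊆ range 7) (hcard : #S = 3)
    (hval : ∑ j ∈ S, (6 - j) = 9) : ∃ c, S = valueNineBundle c := by
  have key : ∀ S ∈ (range 7).powerset, #S = 3 → ∑ j ∈ S, (6 - j) = 9 →
      ∃ c, S = valueNineBundle c := by decide
  exact key S (mem_powerset.2 hS) hcard hval

def targetBundleIndex : Fin 7 → Fin 5 := ![1, 1, 0, 2, 2, 3, 4]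

theorem valueNineBundle_targetBundleIndex (k : Fin 7) :
    valueNineBundle (targetBundleIndex k) = target14 k := by
  fin_cases k <;> rfl

theorem card_fiber_eq_targetBundleIndex_of_regular {ι : Type*} [Fintype ι] (F : ι → Fin 5)
    (hregular : ∀ j < 7, #{i | j ∈ valueNineBundle (F i)} = 3) (c : Fin 5) :
    #{i | F i = c} = #{k | targetBundleIndex k = c} := by
  have hcover (j : ℕ) (hj : j < 7) :
      ∑ c : Fin 5 with j ∈ valueNineBundle c, #{i | F i = c} = 3 :=
    (card_filter_comp_eq_sum_card_fiber F _).symm.trans (hregular j hj)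
  have h0 := hcover 0 (by norm_num)
  have h1 := hcover 1 (by norm_num)
  have h2 := hcover 2 (by norm_num)
  have h3 := hcover 3 (by norm_num)
  have h4 := hcover 4 (by norm_num)
  have h5 := hcover 5 (by norm_num)
  have h6 := hcover 6 (by norm_num)
  simp only [sum_filter, Fin.sum_univ_five] at h0 h1 h2 h3 h4 h5 h6
  simp only [valueNineBundle, Matrix.cons_val, mem_insert, mem_singleton, Nat.reduceEqDiff,
    or_self, or_false, or_true, ↓reduceIte, add_zero, zero_add] at h0 h1 h2 h3 h4 h5 h6
  have target_count : ∀ c, #{k | targetBundleIndex k = c} = ![1, 2, 2, 1, 1] c := by decide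
  rw [target_count]
  fin_cases c <;>
    simp only [Fin.zero_eta, Fin.mk_one, Fin.reduceFinMk, Matrix.cons_val] <;> omega

/-- Let n = 7, d = 3 and u(j) = 6 − j.  In any complete 3-regular bipartite matching
(7×7 binary matrix, all row and column sums 3) in which every left bundle has u-value
exactly 9, the bundles must be, up to a permutation of the bundles,
{0,4,5}, {0,4,5}, {0,3,6}, {1,2,6}, {1,2,6}, {1,3,5}, {2,3,4}. -/
theorem stmt_14 (M : ℕ → ℕ → Bool)
    (hrow : ∀ i < 7, ((Finset.range 7).filter (fun j => M i j)).card = 3)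
    (hcol : ∀ j < 7, ((Finset.range 7).filter (fun i => M i j)).card = 3)
    (hval : ∀ i < 7, ∑ j ∈ (Finset.range 7).filter (fun j => M i j), (6 - j) = 9) :
    ∃ σ : Equiv.Perm (Fin 7), ∀ k : Fin 7,
      (Finset.range 7).filter (fun j => M ((σ k : Fin 7) : ℕ) j) = target14 k := by
  choose F hF using fun i : Fin 7 =>
    exists_eq_valueNineBundle (filter_subset _ _) (hrow i i.2) (hval i i.2)
  have hregular : ∀ j < 7, #{i | j ∈ valueNineBundle (F i)} = 3 := fun j hj => by
    rw [← hcol j hj, card_filter_range_eq_card_filter_fin]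
    simp only [← hF, mem_filter, mem_range, hj, true_and]
  obtain ⟨σ, hσ⟩ := Equiv.Perm.exists_apply_eq_of_card_fiber_eq
    (card_fiber_eq_targetBundleIndex_of_regular F hregular)
  exact ⟨σ, fun k => by rw [hF, hσ, valueNineBundle_targetBundleIndex]⟩
end

section
/- For n = 7, d = 3, with identical utilities u^ℓ(j) = 6−j for left-agents and u^r(i) = 6−i for right-agents, no complete matching (7×7 binary matrix with all row/column sums 3) is 0.89-DMMS; in particular, in any complete matching where every left-agent has utility ≥ 9, some right-agent has utility ≤ 8, while MMS^r = 9. -/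
/-!
Summing utilities over all edges, each side receives total utility `3 · (0 + 1 + ⋯ + 6) = 63`,
so if every agent on both sides had utility at least `9`, every agent would have utility exactly
`9`. Then the set of columns matched to each row is one of the five triples of `{0, …, 6}` with
index sum `9`. Grouping the rows by their triple and reading off columns `1, 2, 3, 6`
(counting rows, and then weighting them by `6 - i`) forces the rows of type `{1, 3, 5}` and those
of type `{2, 3, 4}` each to consist of row `3` alone, which is absurd.
-/

open Finset Function

/-- Complete matching for n = 7, d = 3: a 7×7 binary matrix with all row and column
sums equal to 3. -/
def Comp15 (M : ℕ → ℕ → Bool) : Prop :=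
  (∀ i < 7, ((Finset.range 7).filter (fun j => M i j)).card = 3) ∧
  (∀ j < 7, ((Finset.range 7).filter (fun i => M i j)).card = 3)

theorem sum_sum_filter_eq_nsmul_sum {α β γ : Type*} [AddCommMonoid γ] (M : α → β → Bool)
    (s : Finset α) (t : Finset β) {d : ℕ} (hrow : ∀ i ∈ s, (t.filter (fun j => M i j)).card = d)
    (w : α → γ) :
    ∑ j ∈ t, ∑ i ∈ s.filter (fun i => M i j), w i = d • ∑ i ∈ s, w i := by
  refine (sum_sum_bipartiteAbove_eq_sum_sum_bipartiteBelow (fun i j => M i j = true)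
    fun i _ => w i).symm.trans ?_
  rw [smul_sum]
  refine sum_congr rfl fun i hi => ?_
  rw [sum_const, ← hrow i hi]
  rfl

theorem sum_filter_mem_eq_sum_fiberwise {α β γ : Type*} [DecidableEq β] [AddCommMonoid γ]
    {s : Finset α} {R : α → Finset β} {𝒯 : Finset (Finset β)} (hR : ∀ i ∈ s, R i ∈ 𝒯) (b : β)
    (g : α → γ) :
    ∑ i ∈ s.filter (fun i => b ∈ R i), g i =
      ∑ T ∈ 𝒯.filter (fun T => b ∈ T), ∑ i ∈ s.filter (fun i => R i = T), g i := by
  rw [← sum_fiberwise_of_maps_to (t := 𝒯.filter (fun T => b ∈ T)) (g := R)]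
  · refine sum_congr rfl fun T hT => ?_
    rw [filter_filter]
    exact sum_congr (filter_congr fun i _ => ⟨And.right, fun hi => ⟨hi ▸ (mem_filter.1 hT).2, hi⟩⟩)
      fun _ _ => rfl
  · intro i hi
    rw [mem_filter] at hi ⊢
    exact ⟨hR i hi.1, hi.2⟩

/-- The utility of right agent `j`; that of left agent `i` is `rightUtility (swap M) i`. -/
def rightUtility (M : ℕ → ℕ → Bool) (j : ℕ) : ℕ :=
  ∑ i ∈ (range 7).filter (fun i => M i j), (6 - i)

theorem Comp15.swap {M : ℕ → ℕ → Bool} (hM : Comp15 M) : Comp15 (swap M) :=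
  ⟨hM.2, hM.1⟩

theorem sum_rightUtility {M : ℕ → ℕ → Bool}
    (hrow : ∀ i < 7, ((range 7).filter (fun j => M i j)).card = 3) :
    ∑ j ∈ range 7, rightUtility M j = 63 := by
  unfold rightUtility
  rw [sum_sum_filter_eq_nsmul_sum M _ _ fun i hi => hrow i (mem_range.1 hi)]
  rfl

theorem exists_rightUtility_le_nine {M : ℕ → ℕ → Bool} (hM : Comp15 M) :
    ∃ j < 7, rightUtility M j ≤ 9 := by
  obtain ⟨j, hj, hle⟩ := exists_le_of_sum_le (s := range 7) ⟨0, mem_range.2 (by norm_num)⟩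
    (f := rightUtility M) (g := fun _ => 9) (by rw [sum_rightUtility hM.1]; rfl)
  exact ⟨j, mem_range.1 hj, hle⟩

theorem rightUtility_eq_nine_of_le {M : ℕ → ℕ → Bool}
    (hrow : ∀ i < 7, ((range 7).filter (fun j => M i j)).card = 3)
    (h9 : ∀ j < 7, 9 ≤ rightUtility M j) :
    ∀ j < 7, rightUtility M j = 9 := by
  have hall := (sum_eq_sum_iff_of_le (f := fun _ => 9) (g := rightUtility M)
    fun j hj => h9 j (mem_range.1 hj)).1 (by rw [sum_rightUtility hrow]; rfl)
  exact fun j hj => (hall j (mem_range.2 hj)).symm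

def nineTriples : Finset (Finset ℕ) :=
  {{0, 3, 6}, {0, 4, 5}, {1, 2, 6}, {1, 3, 5}, {2, 3, 4}}

set_option maxRecDepth 8000 in
theorem mem_nineTriples {S : Finset ℕ} (hS : S ⊆ range 7) (hcard : S.card = 3)
    (hsum : ∑ j ∈ S, (6 - j) = 9) : S ∈ nineTriples := by
  have hclassify : ∀ S ∈ (range 7).powerset, S.card = 3 → ∑ j ∈ S, (6 - j) = 9 →
      S ∈ nineTriples := by
    decide
  exact hclassify S (mem_powerset.2 hS) hcard hsum

/-- Columns `1, 2, 6, 3` meet the row types `{b, c}, {b, e}, {a, b}, {a, c, e}` respectively,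
where `a, b, c, e` stand for `{0, 3, 6}, {1, 2, 6}, {1, 3, 5}, {2, 3, 4}`; eliminating gives
`3c = 3e = v`. -/
theorem three_mul_sum_type_eq {R : ℕ → Finset ℕ} (hR : ∀ i ∈ range 7, R i ∈ nineTriples)
    (g : ℕ → ℕ) {v : ℕ} (hcol : ∀ j < 7, ∑ i ∈ (range 7).filter (fun i => j ∈ R i), g i = v) :
    3 * ∑ i ∈ (range 7).filter (fun i => R i = {1, 3, 5}), g i = v ∧
      3 * ∑ i ∈ (range 7).filter (fun i => R i = {2, 3, 4}), g i = v := by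
  have col : ∀ j < 7, ∑ T ∈ nineTriples.filter (fun T => j ∈ T),
      ∑ i ∈ (range 7).filter (fun i => R i = T), g i = v := fun j hj => by
    rw [← sum_filter_mem_eq_sum_fiberwise hR]
    exact hcol j hj
  have h1 := col 1 (by norm_num)
  have h2 := col 2 (by norm_num)
  have h6 := col 6 (by norm_num)
  have h3 := col 3 (by norm_num)
  rw [show nineTriples.filter (fun T => 1 ∈ T) = {{1, 2, 6}, {1, 3, 5}} by decide,
    sum_pair (by decide)] at h1
  rw [show nineTriples.filter (fun T => 2 ∈ T) = {{1, 2, 6}, {2, 3, 4}} by decide,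
    sum_pair (by decide)] at h2
  rw [show nineTriples.filter (fun T => 6 ∈ T) = {{0, 3, 6}, {1, 2, 6}} by decide,
    sum_pair (by decide)] at h6
  rw [show nineTriples.filter (fun T => 3 ∈ T) = {{0, 3, 6}, {1, 3, 5}, {2, 3, 4}} by decide,
    sum_insert (by decide), sum_pair (by decide)] at h3
  omega

theorem false_of_utilities_eq_nine {M : ℕ → ℕ → Bool} (hM : Comp15 M)
    (hleft : ∀ i < 7, rightUtility (swap M) i = 9) (hright : ∀ j < 7, rightUtility M j = 9) :
    False := by
  set R : ℕ → Finset ℕ := fun i => (range 7).filter (fun j => M i j)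
  have hR : ∀ i ∈ range 7, R i ∈ nineTriples := fun i hi =>
    mem_nineTriples (filter_subset _ _) (hM.1 i (mem_range.1 hi)) (hleft i (mem_range.1 hi))
  have hcol : ∀ j < 7, (range 7).filter (fun i => M i j) = (range 7).filter (fun i => j ∈ R i) :=
    fun j hj => filter_congr fun i _ => by simp [R, hj]
  obtain ⟨hcard135, hcard234⟩ := three_mul_sum_type_eq hR (fun _ => 1) fun j hj => by
    rw [← hcol j hj, ← card_eq_sum_ones]
    exact hM.2 j hj
  obtain ⟨hweight135, hweight234⟩ := three_mul_sum_type_eq hR (fun i => 6 - i) fun j hj => by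
    rw [← hcol j hj]
    exact hright j hj
  have row_three : ∀ T, 3 * ∑ i ∈ (range 7).filter (fun i => R i = T), 1 = 3 →
      3 * ∑ i ∈ (range 7).filter (fun i => R i = T), (6 - i) = 9 → R 3 = T := by
    intro T hcard hweight
    obtain ⟨x, hx⟩ := (card_eq_one (s := (range 7).filter fun i => R i = T)).1
      (by rw [card_eq_sum_ones]; omega)
    have hxT := mem_filter.1 (hx ▸ mem_singleton_self x)
    rw [hx, sum_singleton] at hweight
    obtain rfl : x = 3 := by have := mem_range.1 hxT.1; omega
    exact hxT.2
  exact absurd ((row_three _ hcard135 hweight135).symm.trans (row_three _ hcard234 hweight234))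
    (by decide)

theorem exists_rightUtility_le_eight {M : ℕ → ℕ → Bool} (hM : Comp15 M)
    (hleft : ∀ i < 7, 9 ≤ rightUtility (swap M) i) : ∃ j < 7, rightUtility M j ≤ 8 := by
  by_contra! hright
  exact false_of_utilities_eq_nine hM (rightUtility_eq_nine_of_le hM.swap.1 hleft)
    (rightUtility_eq_nine_of_le hM.1 hright)

theorem nine_le_of_le_cast {u : ℕ} (h : (0.89 : ℝ) * 9 ≤ u) : 9 ≤ u := by
  by_contra! hu
  have : (u : ℝ) ≤ 8 := by exact_mod_cast Nat.le_of_lt_succ hu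
  norm_num at h
  linarith

def exampleMatching : ℕ → ℕ → Bool := fun i j => decide ((i, j) ∈
  [(2, 0), (3, 0), (4, 0), (1, 1), (3, 1), (5, 1), (0, 2), (3, 2), (6, 2), (0, 3), (4, 3),
   (5, 3), (1, 4), (2, 4), (6, 4), (0, 5), (4, 5), (5, 5), (1, 6), (2, 6), (6, 6)])

/-- For n = 7, d = 3, with identical utilities u^ℓ(j) = 6 − j on the left and
u^r(i) = 6 − i on the right: MMS^r = 9 (first conjunct); in any complete matching where
every left agent has utility ≥ 9, some right agent has utility ≤ 8 (second conjunct);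
and no complete matching is 0.89-DMMS (third conjunct). -/
theorem stmt_15 :
    ((∃ M : ℕ → ℕ → Bool, Comp15 M ∧
        ∀ j < 7, 9 ≤ ∑ i ∈ (Finset.range 7).filter (fun i => M i j), (6 - i)) ∧
      (∀ M : ℕ → ℕ → Bool, Comp15 M →
        ∃ j < 7, ∑ i ∈ (Finset.range 7).filter (fun i => M i j), (6 - i) ≤ 9)) ∧
    (∀ M : ℕ → ℕ → Bool, Comp15 M →
      (∀ i < 7, 9 ≤ ∑ j ∈ (Finset.range 7).filter (fun j => M i j), (6 - j)) →
      ∃ j < 7, ∑ i ∈ (Finset.range 7).filter (fun i => M i j), (6 - i) ≤ 8) ∧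
    (∀ M : ℕ → ℕ → Bool, Comp15 M →
      ¬ ((∀ i < 7, (0.89 : ℝ) * 9
            ≤ ((∑ j ∈ (Finset.range 7).filter (fun j => M i j), (6 - j) : ℕ) : ℝ)) ∧
         (∀ j < 7, (0.89 : ℝ) * 9
            ≤ ((∑ i ∈ (Finset.range 7).filter (fun i => M i j), (6 - i) : ℕ) : ℝ)))) := by
  refine ⟨⟨⟨exampleMatching, ⟨by decide, by decide⟩, by decide⟩,
    fun M hM => exists_rightUtility_le_nine hM⟩,
    fun M hM hleft => exists_rightUtility_le_eight hM hleft, ?_⟩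
  rintro M hM ⟨hleft, hright⟩
  obtain ⟨j, hj, hle⟩ :=
    exists_rightUtility_le_eight hM fun i hi => nine_le_of_le_cast (hleft i hi)
  exact (nine_le_of_le_cast (hright j hj)).not_gt (Nat.lt_succ_of_le hle)
end

section
/- For n agents per side and common degree d = 2, with identical utilities on each side, the matching M defined (for n even) by M_i^ℓ = M_i^r = {i, n−1−i} for all i is complete, SD-DEF1, and achieves min_i u^ℓ(M_i^ℓ) = MMS^ℓ and min_j u^r(M_j^r) = MMS^r, where utilities are (wlog) nonincreasing in index. -/
/-!
Both sides are symmetric, so consider the left. The bundle `{i, n-1-i}` is worth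
`u i + u (n-1-i)`, and for any `a + b < n` some agent of a complete 2-regular matching gets
at most `u a + u b`: summed over all agents, the number of own items below `a` plus the number
below `b` is `2a + 2b < 2n`, so some agent scores at most one, and then its two items can be
paired with `a` and `b` so that each item comes at or after its partner. Since `u` is
nonincreasing, the least valuable bundle of any complete 2-regular matching is worth at most
every bundle of the symmetric one.
-/

open Finset

lemma filter_range_eq_pair {n i : ℕ} (hi : i < n) :
    (range n).filter (fun j => j = i ∨ j = n - 1 - i) = {i, n - 1 - i} := by
  ext j
  simp only [mem_filter, mem_range, mem_insert, mem_singleton]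
  omega

lemma card_filter_range_pair {n i : ℕ} (heven : Even n) (hi : i < n) :
    #{j ∈ range n | j = i ∨ j = n - 1 - i} = 2 := by
  obtain ⟨m, rfl⟩ := heven
  rw [filter_range_eq_pair hi, card_pair (by omega)]

lemma card_filter_pair_le_one {m i t : ℕ} (h : ¬(i < t ∧ m - i < t)) :
    #{j ∈ range t | j = i ∨ j = m - i} ≤ 1 :=
  card_le_one.2 fun x hx y hy => by
    simp only [mem_filter, mem_range] at hx hy
    omega

lemma card_filter_pair_le_two (m i t : ℕ) : #{j ∈ range t | j = i ∨ j = m - i} ≤ 2 :=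
  (card_le_card fun j hj => by simpa using (mem_filter.1 hj).2).trans card_le_two

/-- Prefix counts of the pairs `{i, m - i}` differ by at most one: a pair lying entirely
below `t` contains an element at least `m / 2`, and every pair has an element at most `m / 2`. -/
lemma card_filter_pair_le_card_filter_pair_add_one (m i i' t : ℕ) :
    #{j ∈ range t | j = i' ∨ j = m - i'} ≤ #{j ∈ range t | j = i ∨ j = m - i} + 1 := by
  by_cases h : i' < t ∧ m - i' < t
  · have hpos : 0 < #{j ∈ range t | j = i ∨ j = m - i} := by
      rcases lt_or_ge i t with hit | hit
      · exact card_pos.2 ⟨i, by simp [hit]⟩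
      · exact card_pos.2 ⟨m - i, by simp; omega⟩
    have := card_filter_pair_le_two m i' t
    omega
  · have := card_filter_pair_le_one h
    omega

lemma Antitone.sum_le_add_of_card_eq_two {u : ℕ → ℝ} (hu : Antitone u) {S : Finset ℕ}
    (hS : #S = 2) {a b : ℕ} (h : #{j ∈ S | j < a} + #{j ∈ S | j < b} ≤ 1) :
    ∑ j ∈ S, u j ≤ u a + u b := by
  obtain ⟨x, y, hxy, rfl⟩ := card_eq_two.1 hS
  simp only [card_filter, sum_pair hxy] at h ⊢
  have : (a ≤ x ∧ b ≤ y) ∨ (b ≤ x ∧ a ≤ y) := by split_ifs at h <;> omega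
  rcases this with ⟨hax, hby⟩ | ⟨hbx, hay⟩
  · linarith [hu hax, hu hby]
  · linarith [hu hbx, hu hay]

lemma sum_card_filter_lt_eq (M : ℕ → ℕ → Bool) {n d t : ℕ}
    (hcol : ∀ j < n, #{i ∈ range n | M i j} = d) (ht : t ≤ n) :
    ∑ k ∈ range n, #{j ∈ (range n).filter (fun j => M k j) | j < t} = d * t := by
  have hprefix : ∀ k, ((range n).filter (fun j => M k j)).filter (· < t)
      = (range t).filter (fun j => M k j) := fun k => by
    ext j
    simp only [mem_filter, mem_range]
    exact ⟨fun h => ⟨h.2, h.1.2⟩, fun h => ⟨⟨by omega, h.2⟩, h.1⟩⟩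
  calc ∑ k ∈ range n, #{j ∈ (range n).filter (fun j => M k j) | j < t}
      = ∑ j ∈ range t, #{i ∈ range n | M i j} := by
        simp only [hprefix, card_filter]
        exact sum_comm
    _ = ∑ _j ∈ range t, d := sum_congr rfl fun j hj => hcol j (by rw [mem_range] at hj; omega)
    _ = d * t := by rw [sum_const, card_range, smul_eq_mul, mul_comm]

lemma exists_sum_filter_le_add (M : ℕ → ℕ → Bool) {n a b : ℕ}
    (hrow : ∀ i < n, #{j ∈ range n | M i j} = 2)
    (hcol : ∀ j < n, #{i ∈ range n | M i j} = 2)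
    (hab : a + b < n) {u : ℕ → ℝ} (hu : Antitone u) :
    ∃ k ∈ range n, ∑ j ∈ (range n).filter (fun j => M k j), u j ≤ u a + u b := by
  have hcount : ∑ k ∈ range n, (#{j ∈ (range n).filter (fun j => M k j) | j < a}
      + #{j ∈ (range n).filter (fun j => M k j) | j < b}) < ∑ _k ∈ range n, 2 := by
    rw [sum_add_distrib, sum_card_filter_lt_eq M hcol (by omega),
      sum_card_filter_lt_eq M hcol (by omega), sum_const, card_range, smul_eq_mul]
    omega
  obtain ⟨k, hk, hlt⟩ := exists_lt_of_sum_lt hcount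
  exact ⟨k, hk, hu.sum_le_add_of_card_eq_two (hrow k (mem_range.1 hk)) (by omega)⟩

lemma exists_sum_filter_le_sum_pair (M : ℕ → ℕ → Bool) {n : ℕ} (hn : 0 < n)
    (hrow : ∀ i < n, #{j ∈ range n | M i j} = 2)
    (hcol : ∀ j < n, #{i ∈ range n | M i j} = 2)
    (heven : Even n) {u : ℕ → ℝ} (hu : Antitone u) :
    ∃ i' < n, ∀ i < n, ∑ j ∈ (range n).filter (fun j => M i' j), u j
      ≤ ∑ j ∈ (range n).filter (fun j => j = i ∨ j = n - 1 - i), u j := by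
  obtain ⟨i', hi', hmin⟩ := exists_min_image (range n)
    (fun k => ∑ j ∈ (range n).filter (fun j => M k j), u j) ⟨0, mem_range.2 hn⟩
  refine ⟨i', mem_range.1 hi', fun i hi => ?_⟩
  obtain ⟨k, hk, hle⟩ := exists_sum_filter_le_add M hrow hcol
    (show i + (n - 1 - i) < n by omega) hu
  have hpair : i ≠ n - 1 - i := by obtain ⟨m, rfl⟩ := heven; omega
  rw [filter_range_eq_pair hi, sum_pair hpair]
  exact (hmin k hk).trans hle

theorem stmt_16_general (n : ℕ) (hn : 0 < n) (heven : Even n)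
    (ul ur : ℕ → ℝ)
    (hulm : ∀ j j', j ≤ j' → ul j' ≤ ul j)
    (hurm : ∀ i i', i ≤ i' → ur i' ≤ ur i) :
    (∀ i < n, ((Finset.range n).filter (fun j => j = i ∨ j = n - 1 - i)).card = 2) ∧
    (∀ j < n, ((Finset.range n).filter (fun i => i = j ∨ i = n - 1 - j)).card = 2) ∧
    (∀ i < n, ∀ i' < n, ∀ t ≤ n,
      ((Finset.range t).filter (fun j => j = i' ∨ j = n - 1 - i')).card
        ≤ ((Finset.range t).filter (fun j => j = i ∨ j = n - 1 - i)).card + 1) ∧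
    (∀ j < n, ∀ j' < n, ∀ t ≤ n,
      ((Finset.range t).filter (fun i => i = j' ∨ i = n - 1 - j')).card
        ≤ ((Finset.range t).filter (fun i => i = j ∨ i = n - 1 - j)).card + 1) ∧
    (∀ M' : ℕ → ℕ → Bool,
      (∀ i < n, ((Finset.range n).filter (fun j => M' i j)).card = 2) →
      (∀ j < n, ((Finset.range n).filter (fun i => M' i j)).card = 2) →
      ∃ i' < n, ∀ i < n,
        ∑ j ∈ (Finset.range n).filter (fun j => M' i' j), ul j
          ≤ ∑ j ∈ (Finset.range n).filter (fun j => j = i ∨ j = n - 1 - i), ul j) ∧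
    (∀ M' : ℕ → ℕ → Bool,
      (∀ i < n, ((Finset.range n).filter (fun j => M' i j)).card = 2) →
      (∀ j < n, ((Finset.range n).filter (fun i => M' i j)).card = 2) →
      ∃ j' < n, ∀ j < n,
        ∑ i ∈ (Finset.range n).filter (fun i => M' i j'), ur i
          ≤ ∑ i ∈ (Finset.range n).filter (fun i => i = j ∨ i = n - 1 - j), ur i) :=
  ⟨fun _ hi => card_filter_range_pair heven hi,
    fun _ hj => card_filter_range_pair heven hj,
    fun i _ i' _ t _ => card_filter_pair_le_card_filter_pair_add_one (n - 1) i i' t,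
    fun j _ j' _ t _ => card_filter_pair_le_card_filter_pair_add_one (n - 1) j j' t,
    fun M' hrow hcol => exists_sum_filter_le_sum_pair M' hn hrow hcol heven hulm,
    fun M' hrow hcol =>
      exists_sum_filter_le_sum_pair (fun i j => M' j i) hn hcol hrow heven hurm⟩

/-- For n agents per side (n even and positive), common degree d = 2, with identical
nonincreasing nonnegative utilities u^ℓ (left) and u^r (right) — so the common ranking
on each side is 0 ≻ 1 ≻ … ≻ n−1 — the symmetric matching M with
M_i^ℓ = M_i^r = {i, n−1−i} is complete (all degrees 2), SD-DEF1, and achieves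
min_i u^ℓ(M_i^ℓ) = MMS^ℓ and min_j u^r(M_j^r) = MMS^r: for every complete 2-regular
matching M' there is an agent whose M'-bundle is worth no more than every bundle of M. -/
theorem stmt_16 (n : ℕ) (hn : 0 < n) (heven : Even n)
    (ul ur : ℕ → ℝ)
    (hul0 : ∀ j, 0 ≤ ul j) (hur0 : ∀ i, 0 ≤ ur i)
    (hulm : ∀ j j', j ≤ j' → ul j' ≤ ul j)
    (hurm : ∀ i i', i ≤ i' → ur i' ≤ ur i) :
    (∀ i < n, ((Finset.range n).filter (fun j => j = i ∨ j = n - 1 - i)).card = 2) ∧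
    (∀ j < n, ((Finset.range n).filter (fun i => i = j ∨ i = n - 1 - j)).card = 2) ∧
    (∀ i < n, ∀ i' < n, ∀ t ≤ n,
      ((Finset.range t).filter (fun j => j = i' ∨ j = n - 1 - i')).card
        ≤ ((Finset.range t).filter (fun j => j = i ∨ j = n - 1 - i)).card + 1) ∧
    (∀ j < n, ∀ j' < n, ∀ t ≤ n,
      ((Finset.range t).filter (fun i => i = j' ∨ i = n - 1 - j')).card
        ≤ ((Finset.range t).filter (fun i => i = j ∨ i = n - 1 - j)).card + 1) ∧
    (∀ M' : ℕ → ℕ → Bool,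
      (∀ i < n, ((Finset.range n).filter (fun j => M' i j)).card = 2) →
      (∀ j < n, ((Finset.range n).filter (fun i => M' i j)).card = 2) →
      ∃ i' < n, ∀ i < n,
        ∑ j ∈ (Finset.range n).filter (fun j => M' i' j), ul j
          ≤ ∑ j ∈ (Finset.range n).filter (fun j => j = i ∨ j = n - 1 - i), ul j) ∧
    (∀ M' : ℕ → ℕ → Bool,
      (∀ i < n, ((Finset.range n).filter (fun j => M' i j)).card = 2) →
      (∀ j < n, ((Finset.range n).filter (fun i => M' i j)).card = 2) →
      ∃ j' < n, ∀ j < n,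
        ∑ i ∈ (Finset.range n).filter (fun i => M' i j'), ur i
          ≤ ∑ i ∈ (Finset.range n).filter (fun i => i = j ∨ i = n - 1 - j), ur i) :=
  stmt_16_general n hn heven ul ur hulm hurm
end

section
/- Suppose a complete matching M is MMS over the left side (every left-agent's utility is at least MMS^ℓ) under a common left utility u^ℓ, and among all such matchings M minimizes the number of left-agents whose utility equals MMS^ℓ. Then M is EF1 over the left side: for any left-agents i, i', either u^ℓ(M_i^ℓ) ≥ u^ℓ(M_{i'}^ℓ), or there exists j' ∈ M_{i'}^ℓ with u^ℓ(M_i^ℓ) ≥ u^ℓ(M_{i'}^ℓ \ {j'}). -/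
/-! Some agent `i₀` sits exactly at the maximin share, so whenever `i` envies `i'` even after
removing any single good, so does `i₀`. Bundles have equal size, so the smaller total of `i₀`
yields goods `j` of `i₀` and `j'` of `i'` with `u j < u j'`. Exchanging them keeps the matching
complete, lifts `i₀` strictly above the maximin share and leaves `i'` with at least
`u(M_{i'}) - u j' > u(M_{i₀})`. Fewer agents now sit at the maximin share, contradicting
minimality. -/

/-- Complete matching: n agents per side, every row and column of the n×n binary
matrix sums to d. -/
def Comp18 (n d : ℕ) (M : ℕ → ℕ → Bool) : Prop :=
  (∀ i < n, ((Finset.range n).filter (fun j => M i j)).card = d) ∧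
  (∀ j < n, ((Finset.range n).filter (fun i => M i j)).card = d)

/-- The utility of left agent i's bundle under the common additive left utility u. -/
def val18 (n : ℕ) (u : ℕ → ℝ) (M : ℕ → ℕ → Bool) (i : ℕ) : ℝ :=
  ∑ j ∈ (Finset.range n).filter (fun j => M i j), u j

open Finset

theorem Finset.exists_lt_of_sum_lt_sum_of_card_eq {ι M : Type*} [AddCommMonoid M]
    [LinearOrder M] [IsOrderedAddMonoid M] {s t : Finset ι} {f : ι → M} (hcard : #s = #t)
    (h : ∑ i ∈ s, f i < ∑ i ∈ t, f i) : ∃ i ∈ s, ∃ j ∈ t, f i < f j := by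
  by_contra! H
  obtain rfl | hs := s.eq_empty_or_nonempty
  · obtain rfl : t = ∅ := card_eq_zero.mp hcard.symm
    simp at h
  obtain ⟨a, ha, hmin⟩ := s.exists_min_image f hs
  refine h.not_ge ?_
  calc ∑ j ∈ t, f j ≤ #t • f a := sum_le_card_nsmul t f (f a) (H a ha)
    _ = #s • f a := by rw [hcard]
    _ ≤ ∑ i ∈ s, f i := card_nsmul_le_sum s f (f a) hmin

theorem Finset.exists_mem_sdiff_lt_of_sum_lt_sum_of_card_eq {ι M : Type*} [DecidableEq ι]
    [AddCommMonoid M] [LinearOrder M] [IsOrderedCancelAddMonoid M] {s t : Finset ι} {f : ι → M}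
    (hcard : #s = #t) (h : ∑ i ∈ s, f i < ∑ i ∈ t, f i) :
    ∃ i ∈ s \ t, ∃ j ∈ t \ s, f i < f j :=
  exists_lt_of_sum_lt_sum_of_card_eq (card_sdiff_comm hcard) (sum_sdiff_lt_sum_sdiff.mpr h)

theorem Set.ncard_lt_ncard_of_imp {n : ℕ} {p q : ℕ → Prop} (hqp : ∀ a, q a → p a) {a : ℕ}
    (ha : a < n) (hpa : p a) (hqa : ¬q a) :
    {a | a < n ∧ q a}.ncard < {a | a < n ∧ p a}.ncard :=
  Set.ncard_lt_ncard ⟨fun b hb => ⟨hb.1, hqp b hb.2⟩, fun h => hqa (h ⟨ha, hpa⟩).2⟩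
    ((Set.finite_Iio n).subset fun _ hb => hb.1)

namespace BoolMatrix

variable {n : ℕ} {M : ℕ → ℕ → Bool} {i i' j j' : ℕ}

def row (n : ℕ) (M : ℕ → ℕ → Bool) (i : ℕ) : Finset ℕ := (range n).filter (fun j => M i j)

@[simp] theorem mem_row {a : ℕ} : a ∈ row n M i ↔ a < n ∧ M i a = true := by
  simp [row]

/-- The swap of the paper: row `i` hands `j` to row `i'` and receives `j'` from it. -/
def exchange (M : ℕ → ℕ → Bool) (i i' j j' : ℕ) : ℕ → ℕ → Bool := fun a b =>
  if a = i ∧ b = j ∨ a = i' ∧ b = j' then false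
  else if a = i ∧ b = j' ∨ a = i' ∧ b = j then true
  else M a b

theorem exchange_comm : exchange M i i' j j' = exchange M i' i j' j := by
  funext a b
  simp only [exchange, or_comm]

theorem swap_exchange :
    Function.swap (exchange M i i' j j') = exchange (Function.swap M) j j' i i' := by
  funext b a
  simp only [Function.swap, exchange]
  congr 1 <;> grind

theorem row_exchange_of_ne {a : ℕ} (hi : a ≠ i) (hi' : a ≠ i') :
    row n (exchange M i i' j j') a = row n M a := by
  ext b
  simp [exchange, hi, hi']

theorem row_exchange_left (hi : i ≠ i') (hj : j ≠ j') (hj' : j' < n) :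
    row n (exchange M i i' j j') i = insert j' ((row n M i).erase j) := by
  ext b
  by_cases hbj : b = j
  · simp [exchange, hbj, hj]
  by_cases hbj' : b = j'
  · simp [exchange, hbj', hj', hi, hj.symm]
  simp [exchange, hbj, hbj', hi]

theorem row_exchange_left_of_mem (hj : j ∈ row n M i \ row n M i')
    (hj' : j' ∈ row n M i' \ row n M i) :
    row n (exchange M i i' j j') i = insert j' ((row n M i).erase j) := by
  simp only [mem_sdiff, mem_row] at hj hj'
  refine row_exchange_left ?_ ?_ hj'.1.1 <;> rintro rfl <;> grind

theorem card_row_exchange (hj : j ∈ row n M i \ row n M i')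
    (hj' : j' ∈ row n M i' \ row n M i) (a : ℕ) :
    #(row n (exchange M i i' j j') a) = #(row n M a) := by
  have left {i i' j j'} (hj : j ∈ row n M i \ row n M i') (hj' : j' ∈ row n M i' \ row n M i) :
      #(row n (exchange M i i' j j') i) = #(row n M i) := by
    rw [row_exchange_left_of_mem hj hj', card_insert_of_notMem (by simp_all),
      card_erase_of_mem (mem_sdiff.mp hj).1,
      Nat.sub_add_cancel (card_pos.mpr ⟨j, (mem_sdiff.mp hj).1⟩)]
  by_cases hai : a = i
  · rw [hai]; exact left hj hj'
  by_cases hai' : a = i'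
  · rw [hai', exchange_comm]; exact left hj' hj
  · rw [row_exchange_of_ne hai hai']

theorem sum_row_exchange_left {R : Type*} [AddCommGroup R] (f : ℕ → R)
    (hj : j ∈ row n M i \ row n M i') (hj' : j' ∈ row n M i' \ row n M i) :
    ∑ b ∈ row n (exchange M i i' j j') i, f b = ∑ b ∈ row n M i, f b - f j + f j' := by
  rw [row_exchange_left_of_mem hj hj', sum_insert (by simp_all),
    sum_erase_eq_sub (mem_sdiff.mp hj).1]
  abel

end BoolMatrix

open BoolMatrix

theorem Comp18.exchange {n d : ℕ} {M : ℕ → ℕ → Bool} {i i' j j' : ℕ} (hM : Comp18 n d M)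
    (hi : i < n) (hi' : i' < n) (hj : j ∈ row n M i \ row n M i')
    (hj' : j' ∈ row n M i' \ row n M i) : Comp18 n d (exchange M i i' j j') := by
  refine ⟨fun a ha => (card_row_exchange hj hj' a).trans (hM.1 a ha), fun b hb => ?_⟩
  change #(row n (Function.swap (BoolMatrix.exchange M i i' j j')) b) = d
  have hi : i ∈ row n (Function.swap M) j \ row n (Function.swap M) j' := by
    simp_all [Function.swap]
  have hi' : i' ∈ row n (Function.swap M) j' \ row n (Function.swap M) j := by
    simp_all [Function.swap]
  rw [swap_exchange, card_row_exchange hi hi']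
  exact hM.2 b hb

section Val

variable {n : ℕ} {u : ℕ → ℝ} {M : ℕ → ℕ → Bool} {i i' j j' : ℕ}

theorem val18_exchange_left (hj : j ∈ row n M i \ row n M i')
    (hj' : j' ∈ row n M i' \ row n M i) :
    val18 n u (exchange M i i' j j') i = val18 n u M i - u j + u j' :=
  sum_row_exchange_left u hj hj'

theorem val18_exchange_right (hj : j ∈ row n M i \ row n M i')
    (hj' : j' ∈ row n M i' \ row n M i) :
    val18 n u (exchange M i i' j j') i' = val18 n u M i' - u j' + u j := by
  rw [exchange_comm]
  exact val18_exchange_left hj' hj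

theorem val18_exchange_of_ne {a : ℕ} (hi : a ≠ i) (hi' : a ≠ i') :
    val18 n u (exchange M i i' j j') a = val18 n u M a :=
  congrArg (fun s => ∑ b ∈ s, u b) (row_exchange_of_ne hi hi')

end Val

theorem stmt_18_general (n d : ℕ)
    (u : ℕ → ℝ) (hu : ∀ j, 0 ≤ u j) (MMS : ℝ)
    (hMMS2 : ∀ M' : ℕ → ℕ → Bool, Comp18 n d M' → ∃ i < n, val18 n u M' i ≤ MMS)
    (M : ℕ → ℕ → Bool) (hM : Comp18 n d M)
    (hMmms : ∀ i < n, MMS ≤ val18 n u M i)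
    (hmin : ∀ M' : ℕ → ℕ → Bool, Comp18 n d M' → (∀ i < n, MMS ≤ val18 n u M' i) →
      {i | i < n ∧ val18 n u M i = MMS}.ncard ≤ {i | i < n ∧ val18 n u M' i = MMS}.ncard) :
    ∀ i < n, ∀ i' < n,
      val18 n u M i' ≤ val18 n u M i ∨
      ∃ j' < n, M i' j' = true ∧ val18 n u M i' - u j' ≤ val18 n u M i := by
  intro i hi i' hi'
  by_contra! ⟨hlt, hviol⟩
  obtain ⟨i₀, hi₀, hle⟩ := hMMS2 M hM
  have hi₀MMS : val18 n u M i₀ = MMS := le_antisymm hle (hMmms i₀ hi₀)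
  have hi₀i : val18 n u M i₀ ≤ val18 n u M i := hi₀MMS ▸ hMmms i hi
  -- `i₀` envies `i'` too, so `i₀` can trade a worse good for a better one of `i'`.
  obtain ⟨j, hj, j', hj', hjj'⟩ := exists_mem_sdiff_lt_of_sum_lt_sum_of_card_eq
    ((hM.1 i₀ hi₀).trans (hM.1 i' hi').symm) (hi₀i.trans_lt hlt)
  set M' := exchange M i₀ i' j j'
  have hup₀ : MMS < val18 n u M' i₀ := by
    rw [val18_exchange_left hj hj']; linarith
  have hup' : MMS < val18 n u M' i' := by
    have hj'i' := (mem_row.mp (mem_sdiff.mp hj').1)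
    rw [val18_exchange_right hj hj']
    linarith [hviol j' hj'i'.1 hj'i'.2, hu j]
  have hother {a} (h₀ : a ≠ i₀) (h' : a ≠ i') : val18 n u M' a = val18 n u M a :=
    val18_exchange_of_ne h₀ h'
  refine (hmin M' (hM.exchange hi₀ hi' hj hj') fun a ha => ?_).not_gt
    (Set.ncard_lt_ncard_of_imp (fun a ha => ?_) hi₀ hi₀MMS hup₀.ne')
  · by_cases h₀ : a = i₀
    · exact h₀ ▸ hup₀.le
    by_cases h' : a = i'
    · exact h' ▸ hup'.le
    rw [hother h₀ h']; exact hMmms a ha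
  · rwa [← hother (by rintro rfl; exact hup₀.ne' ha) (by rintro rfl; exact hup'.ne' ha)]

/-- Suppose a complete matching M is MMS over the left side (every left agent's bundle
is worth at least MMS, the left maximin share characterized by hMMS1 and hMMS2) and,
among all such matchings, M minimizes the number of left agents whose utility equals
MMS.  Then M is EF1 over the left side: for all left agents i, i', either
u^ℓ(M_i) ≥ u^ℓ(M_{i'}) or some j' ∈ M_{i'} has u^ℓ(M_i) ≥ u^ℓ(M_{i'} \ {j'}). -/
theorem stmt_18 (n d : ℕ) (hn : 0 < n) (hd : 0 < d)
    (u : ℕ → ℝ) (hu : ∀ j, 0 ≤ u j) (MMS : ℝ)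
    (hMMS1 : ∃ M' : ℕ → ℕ → Bool, Comp18 n d M' ∧ ∀ i < n, MMS ≤ val18 n u M' i)
    (hMMS2 : ∀ M' : ℕ → ℕ → Bool, Comp18 n d M' → ∃ i < n, val18 n u M' i ≤ MMS)
    (M : ℕ → ℕ → Bool) (hM : Comp18 n d M)
    (hMmms : ∀ i < n, MMS ≤ val18 n u M i)
    (hmin : ∀ M' : ℕ → ℕ → Bool, Comp18 n d M' → (∀ i < n, MMS ≤ val18 n u M' i) →
      {i | i < n ∧ val18 n u M i = MMS}.ncard ≤ {i | i < n ∧ val18 n u M' i = MMS}.ncard) :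
    ∀ i < n, ∀ i' < n,
      val18 n u M i' ≤ val18 n u M i ∨
      ∃ j' < n, M i' j' = true ∧ val18 n u M i' - u j' ≤ val18 n u M i :=
  stmt_18_general n d u hu MMS hMMS2 M hM hMmms hmin
end

section
/- There exists an instance (n = 10 agents per side, common degree d = 3, left utilities: u^ℓ(0)=u^ℓ(1)=u^ℓ(2)=2 and u^ℓ(j)=1 for j ∈ {3,...,9}; right utilities: u^r(i)=1 for all i) in which every complete matching is DMMS, but some complete matching is not DEF1; specifically, any complete matching with M_0^ℓ = M_1^ℓ = M_2^ℓ = {0,1,2} is DMMS but violates EF1 over the left side. -/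
/-!
Every column of a complete matching holds three left agents, so the left values of all bundles
add up to `3 · (2 + 2 + 2 + 1 · 7) = 39 < 4 · 10`: some left agent gets at most `3`, while
every bundle of three goods is worth at least `3`. Hence `MMS^ℓ = MMS^r = 3` and every complete
matching is DMMS. If rows `0, 1, 2` all take columns `{0, 1, 2}`, these columns are full, so
row `3` gets three goods of value `1`; it then envies row `0`, whose bundle is worth `6` and
still `4` after any good (of value `2`) is removed.
-/

/-- Left utility in the n = 10, d = 3 instance: u^ℓ(0) = u^ℓ(1) = u^ℓ(2) = 2 and
u^ℓ(j) = 1 for j ∈ {3,…,9}.  (Right utility is constantly 1.) -/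
def u19 (j : ℕ) : ℕ := if j < 3 then 2 else 1

/-- Complete matching for n = 10, d = 3. -/
def Comp19 (M : ℕ → ℕ → Bool) : Prop :=
  (∀ i < 10, ((Finset.range 10).filter (fun j => M i j)).card = 3) ∧
  (∀ j < 10, ((Finset.range 10).filter (fun i => M i j)).card = 3)

/-- The left bundle value of agent i. -/
def lval19 (M : ℕ → ℕ → Bool) (i : ℕ) : ℕ :=
  ∑ j ∈ (Finset.range 10).filter (fun j => M i j), u19 j

open Finset

theorem Finset.sum_sum_filter_eq_sum_card_nsmul {α β γ : Type*} [AddCommMonoid γ]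
    (s : Finset α) (t : Finset β) (p : α → β → Prop) [∀ i j, Decidable (p i j)] (f : β → γ) :
    ∑ i ∈ s, ∑ j ∈ t.filter (p i), f j = ∑ j ∈ t, #(s.filter (p · j)) • f j := by
  rw [sum_comm' (t' := t) (s' := fun j => s.filter (p · j))
    (fun i j => by simp only [mem_filter]; tauto)]
  simp only [sum_const]

lemma one_le_u19 (j : ℕ) : 1 ≤ u19 j := by unfold u19; split <;> omega

lemma u19_of_lt_three (j : ℕ) (hj : j < 3) : u19 j = 2 := if_pos hj

lemma u19_of_three_le (j : ℕ) (hj : 3 ≤ j) : u19 j = 1 := if_neg (by omega)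

lemma lval19_zero_of_rows_eq {M : ℕ → ℕ → Bool}
    (hrows : ∀ i < 3, (range 10).filter (fun j => M i j) = ({0, 1, 2} : Finset ℕ)) :
    lval19 M 0 = 6 := by
  unfold lval19
  rw [hrows 0 (by norm_num)]
  decide

namespace Comp19

variable {M : ℕ → ℕ → Bool}

lemma three_le_lval19 (hM : Comp19 M) {i : ℕ} (hi : i < 10) : 3 ≤ lval19 M i := by
  have := card_nsmul_le_sum ((range 10).filter fun j => M i j) u19 1 fun j _ => one_le_u19 j
  rwa [hM.1 i hi, smul_eq_mul, mul_one] at this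

lemma sum_lval19 (hM : Comp19 M) : ∑ i ∈ range 10, lval19 M i = 39 := by
  unfold lval19
  rw [sum_sum_filter_eq_sum_card_nsmul,
    sum_congr rfl fun j hj => by rw [hM.2 j (mem_range.mp hj)]]
  decide

lemma exists_lval19_le_three (hM : Comp19 M) : ∃ i < 10, lval19 M i ≤ 3 := by
  obtain ⟨i, hi, hlt⟩ := exists_lt_of_sum_lt (f := lval19 M) (g := fun _ => 4)
    (s := range 10) (by rw [hM.sum_lval19]; simp)
  exact ⟨i, mem_range.mp hi, Nat.le_of_lt_succ hlt⟩

/-- Columns `0, 1, 2` already contain their three entries in rows `0, 1, 2`. -/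
lemma eq_false_of_rows_eq (hM : Comp19 M)
    (hrows : ∀ i < 3, (range 10).filter (fun j => M i j) = ({0, 1, 2} : Finset ℕ))
    {i j : ℕ} (hi : 3 ≤ i) (hi' : i < 10) (hj : j < 3) :
    M i j = false := by
  have hcol : (range 10).filter (fun i => M i j) = {0, 1, 2} := by
    refine (eq_of_subset_of_card_le (fun i hi => ?_) ?_).symm
    · have hi3 : i < 3 := by simp only [mem_insert, mem_singleton] at hi; omega
      have hj : j ∈ (range 10).filter (fun j => M i j) := by
        rw [hrows i hi3]; simp only [mem_insert, mem_singleton]; omega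
      exact mem_filter.mpr ⟨mem_range.mpr (by omega), (mem_filter.mp hj).2⟩
    · rw [hM.2 j (by omega)]; decide
  by_contra hMij
  have : i ∈ (range 10).filter (fun i => M i j) :=
    mem_filter.mpr ⟨mem_range.mpr hi', by simpa using hMij⟩
  rw [hcol] at this
  simp only [mem_insert, mem_singleton] at this
  omega

lemma lval19_eq_three_of_rows_eq (hM : Comp19 M)
    (hrows : ∀ i < 3, (range 10).filter (fun j => M i j) = ({0, 1, 2} : Finset ℕ))
    {i : ℕ} (hi : 3 ≤ i) (hi' : i < 10) : lval19 M i = 3 := by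
  unfold lval19
  have hval : ∀ j ∈ (range 10).filter (fun j => M i j), u19 j = 1 := fun j hj => by
    refine u19_of_three_le j (not_lt.mp fun hj3 => ?_)
    simp [hM.eq_false_of_rows_eq hrows hi hi' hj3] at hj
  rw [sum_congr rfl hval, sum_const, hM.1 i hi', smul_eq_mul, mul_one]

lemma not_ef1 (hM : Comp19 M)
    (hrows : ∀ i < 3, (range 10).filter (fun j => M i j) = ({0, 1, 2} : Finset ℕ)) :
    ¬ (∀ i < 10, ∀ i' < 10, lval19 M i' ≤ lval19 M i ∨
      ∃ j' < 10, M i' j' = true ∧ lval19 M i' ≤ lval19 M i + u19 j') := by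
  intro hEF
  have h0 := lval19_zero_of_rows_eq hrows
  have h3 := hM.lval19_eq_three_of_rows_eq hrows le_rfl (by norm_num)
  obtain h | ⟨j, hj, hM0j, hle⟩ := hEF 3 (by norm_num) 0 (by norm_num)
  · omega
  · have hj3 : j ∈ ({0, 1, 2} : Finset ℕ) := by
      rw [← hrows 0 (by norm_num)]; exact mem_filter.mpr ⟨mem_range.mpr hj, hM0j⟩
    have : u19 j = 2 := u19_of_lt_three j (by simp only [mem_insert, mem_singleton] at hj3; omega)
    omega

end Comp19

/-- Rows `0, 1, 2` take columns `{0, 1, 2}`; the remaining `7 × 7` block is circulant. -/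
def blockMatching (i j : ℕ) : Bool :=
  if i < 3 then decide (j < 3) else (3 ≤ j && (j + 7 - i) % 7 < 3)

lemma comp19_blockMatching : Comp19 blockMatching := by
  unfold Comp19 blockMatching; decide

/-- In the instance with n = 10 agents per side, common degree d = 3, left utilities
u19 and right utilities constantly 1: MMS^ℓ = 3 and MMS^r = 3 (first two conjuncts);
every complete matching is DMMS (third conjunct); some complete matching has
M_0^ℓ = M_1^ℓ = M_2^ℓ = {0,1,2} (fourth conjunct); and any such complete matching
violates EF1 over the left side (fifth conjunct). -/
theorem stmt_19 :
    ((∃ M : ℕ → ℕ → Bool, Comp19 M ∧ ∀ i < 10, 3 ≤ lval19 M i) ∧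
      (∀ M : ℕ → ℕ → Bool, Comp19 M → ∃ i < 10, lval19 M i ≤ 3)) ∧
    ((∃ M : ℕ → ℕ → Bool, Comp19 M ∧
        ∀ j < 10, 3 ≤ ((Finset.range 10).filter (fun i => M i j)).card) ∧
      (∀ M : ℕ → ℕ → Bool, Comp19 M →
        ∃ j < 10, ((Finset.range 10).filter (fun i => M i j)).card ≤ 3)) ∧
    (∀ M : ℕ → ℕ → Bool, Comp19 M →
      (∀ i < 10, 3 ≤ lval19 M i) ∧
      (∀ j < 10, 3 ≤ ((Finset.range 10).filter (fun i => M i j)).card)) ∧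
    (∃ M : ℕ → ℕ → Bool, Comp19 M ∧
      ∀ i < 3, (Finset.range 10).filter (fun j => M i j) = ({0, 1, 2} : Finset ℕ)) ∧
    (∀ M : ℕ → ℕ → Bool, Comp19 M →
      (∀ i < 3, (Finset.range 10).filter (fun j => M i j) = ({0, 1, 2} : Finset ℕ)) →
      ¬ (∀ i < 10, ∀ i' < 10,
          lval19 M i' ≤ lval19 M i ∨
          ∃ j' < 10, M i' j' = true ∧ lval19 M i' ≤ lval19 M i + u19 j')) := by
  have hB := comp19_blockMatching
  refine ⟨⟨⟨blockMatching, hB, fun i => hB.three_le_lval19⟩,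
      fun M hM => hM.exists_lval19_le_three⟩,
    ⟨⟨blockMatching, hB, fun j hj => (hB.2 j hj).ge⟩,
      fun M hM => ⟨0, by norm_num, (hM.2 0 (by norm_num)).le⟩⟩,
    fun M hM => ⟨fun i => hM.three_le_lval19, fun j hj => (hM.2 j hj).ge⟩,
    ⟨blockMatching, hB, by decide⟩,
    fun M hM hrows => hM.not_ef1 hrows⟩
end
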